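/- arXiv:1403.3522 — 7 statements merged into one kernel-verified Lean document; each statement's English description precedes it below -/
import Mathlib

section
/- Let X be a real Hilbert space, A : X ⇉ X monotone, and B : X → X single-valued. Let M and L be positive definite bounded linear operators on X, let x* ∈ X satisfy 0 ∈ A(x*) + B(x*), and suppose B is co-coercive with respect to L⁻¹ relative to the set {x*}. Let λ_k > 0, α_k ∈ [0,1], and let (x^k), (y^k) be inertial forward–backward iterates. Then for every k ≥ 0, setting φ^k = ½‖x^k − x*‖²_M, the descent inequality φ^{k+1} − φ^k − α_k(φ^k − φ^{k−1}) ≤ −½‖x^{k+1} − y^k‖²_M + (λ_k/4)‖x^{k+1} − y^k‖²_L + α_k‖x^k − x^{k−1}‖²_M holds. -/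
open scoped RealInnerProductSpace

/-- Quadratic expansion for a selfadjoint operator. -/
theorem sa_quad {X : Type*} [NormedAddCommGroup X] [InnerProductSpace ℝ X]
    (M : X →L[ℝ] X) (hMsa : ∀ u v : X, ⟪M u, v⟫ = ⟪u, M v⟫) (u v : X) :
    ⟪M (u + v), u + v⟫ = ⟪M u, u⟫ + 2 * ⟪M u, v⟫ + ⟪M v, v⟫ := by
  have h : ⟪M v, u⟫ = ⟪M u, v⟫ := by rw [hMsa, real_inner_comm]
  rw [map_add, inner_add_left, inner_add_right, inner_add_right]
  linarith

/-- the basic descent inequality for the inertial forward–backward iterates,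
with `φ^k = ½‖x^k − x*‖²_M`.  The convention `x⁻¹ = x⁰` (hence `φ⁻¹ = φ⁰`) is encoded via
truncated subtraction.  `Linv` denotes the inverse of `L`. -/
theorem stmt2 {X : Type*} [NormedAddCommGroup X] [InnerProductSpace ℝ X] [CompleteSpace X]
    (A : X → Set X) (B : X → X) (M L Linv : X →L[ℝ] X)
    -- M and L are selfadjoint and positive definite
    (hMsa : ∀ u v : X, ⟪M u, v⟫ = ⟪u, M v⟫)
    (hMpos : ∃ c > 0, ∀ z : X, c * ‖z‖ ^ 2 ≤ ⟪M z, z⟫)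
    (hLsa : ∀ u v : X, ⟪L u, v⟫ = ⟪u, L v⟫)
    (hLpos : ∃ c > 0, ∀ z : X, c * ‖z‖ ^ 2 ≤ ⟪L z, z⟫)
    (hLinv : ∀ z : X, L (Linv z) = z) (hLinv' : ∀ z : X, Linv (L z) = z)
    -- A is monotone
    (hAmono : ∀ x y u v : X, u ∈ A x → v ∈ A y → 0 ≤ ⟪u - v, x - y⟫)
    -- x* is a solution: 0 ∈ A(x*) + B(x*)
    (xs : X) (hxs : -B xs ∈ A xs)
    -- B is co-coercive w.r.t. L⁻¹ relative to {x*}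
    (hcoco : ∀ x : X, ⟪Linv (B x - B xs), B x - B xs⟫ ≤ ⟪B x - B xs, x - xs⟫)
    (lam αk : ℕ → ℝ) (hlam : ∀ k, 0 < lam k) (hαk : ∀ k, αk k ∈ Set.Icc (0:ℝ) 1)
    -- inertial forward–backward iterates
    (x y : ℕ → X)
    (hy : ∀ k, y k = x k + αk k • (x k - x (k - 1)))
    (hstep : ∀ k, ∃ a ∈ A (x (k + 1)),
      M (y k - x (k + 1)) - lam k • B (y k) = lam k • a)
    (φ : ℕ → ℝ) (hφ : ∀ k, φ k = 1/2 * ⟪M (x k - xs), x k - xs⟫) :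
    ∀ k : ℕ, φ (k + 1) - φ k - αk k * (φ k - φ (k - 1)) ≤
      -(1/2 : ℝ) * ⟪M (x (k + 1) - y k), x (k + 1) - y k⟫
        + lam k / 4 * ⟪L (x (k + 1) - y k), x (k + 1) - y k⟫
        + αk k * ⟪M (x k - x (k - 1)), x k - x (k - 1)⟫ := by
  intro k
  obtain ⟨a, haA, haeq⟩ := hstep k
  obtain ⟨cM, hcM, hMq⟩ := hMpos
  obtain ⟨cL, hcL, hLq⟩ := hLpos
  have hM0 : ∀ u : X, 0 ≤ ⟪M u, u⟫ := fun u => le_trans (by positivity) (hMq u)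
  have hL0 : ∀ u : X, 0 ≤ ⟪L u, u⟫ := fun u => le_trans (by positivity) (hLq u)
  set w := B (y k) - B xs with hw
  set z := x (k + 1) - y k with hz
  -- monotonicity step
  have e1 : M (y k - x (k + 1)) - lam k • w = lam k • (a - -B xs) := by
    have h2 : lam k • (a - -B xs) = lam k • a + lam k • B xs := by
      rw [sub_neg_eq_add, smul_add]
    rw [h2, ← haeq, hw, smul_sub]; abel
  have key1 : lam k * ⟪w, x (k + 1) - xs⟫ ≤ ⟪M (y k - x (k + 1)), x (k + 1) - xs⟫ := by
    have h0 := hAmono (x (k + 1)) xs a (-B xs) haA hxs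
    have h1 : 0 ≤ ⟪M (y k - x (k + 1)) - lam k • w, x (k + 1) - xs⟫ := by
      rw [e1, real_inner_smul_left]; exact mul_nonneg (hlam k).le h0
    rw [inner_sub_left, real_inner_smul_left] at h1; linarith
  -- Young's inequality via positivity of L
  have young : -⟪Linv w, w⟫ - (4⁻¹ : ℝ) * ⟪L z, z⟫ ≤ ⟪w, z⟫ := by
    have h := hL0 (Linv w + (2⁻¹ : ℝ) • z)
    rw [sa_quad L hLsa, hLinv w] at h
    have t1 : ⟪w, Linv w⟫ = ⟪Linv w, w⟫ := real_inner_comm _ _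
    have t2 : ⟪w, (2⁻¹ : ℝ) • z⟫ = 2⁻¹ * ⟪w, z⟫ := real_inner_smul_right _ _ _
    have t3 : ⟪L ((2⁻¹ : ℝ) • z), (2⁻¹ : ℝ) • z⟫ = 4⁻¹ * ⟪L z, z⟫ := by
      rw [map_smul, real_inner_smul_left, real_inner_smul_right]; ring
    rw [t1, t2, t3] at h
    linarith
  -- co-coercivity
  have hco : ⟪Linv w, w⟫ ≤ ⟪w, y k - xs⟫ := hcoco (y k)
  have split : ⟪w, x (k + 1) - xs⟫ = ⟪w, y k - xs⟫ + ⟪w, z⟫ := by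
    rw [← inner_add_right]
    congr 1
    rw [hz]; abel
  have hlow : -(4⁻¹ : ℝ) * ⟪L z, z⟫ ≤ ⟪w, x (k + 1) - xs⟫ := by
    rw [split]; linarith
  have key2 : -(lam k / 4 * ⟪L z, z⟫) ≤ ⟪M (y k - x (k + 1)), x (k + 1) - xs⟫ := by
    have h := mul_le_mul_of_nonneg_left hlow (hlam k).le
    calc -(lam k / 4 * ⟪L z, z⟫) = lam k * (-(4⁻¹ : ℝ) * ⟪L z, z⟫) := by ring
      _ ≤ lam k * ⟪w, x (k + 1) - xs⟫ := h
      _ ≤ _ := key1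
  -- M-norm expansions
  have Ey : ⟪M (y k - xs), y k - xs⟫ = ⟪M z, z⟫ + ⟪M (x (k + 1) - xs), x (k + 1) - xs⟫
      + 2 * ⟪M (y k - x (k + 1)), x (k + 1) - xs⟫ := by
    have h := sa_quad M hMsa (y k - x (k + 1)) (x (k + 1) - xs)
    have e : y k - x (k + 1) + (x (k + 1) - xs) = y k - xs := by abel
    rw [e] at h
    have e2 : ⟪M (y k - x (k + 1)), y k - x (k + 1)⟫ = ⟪M z, z⟫ := by
      have hne : z = -(y k - x (k + 1)) := by rw [hz]; abel
      rw [hne, map_neg, inner_neg_neg]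
    linarith
  have hyxs : y k - xs = (x k - xs) + αk k • (x k - x (k - 1)) := by rw [hy k]; abel
  have Ey2 : ⟪M (y k - xs), y k - xs⟫ = ⟪M (x k - xs), x k - xs⟫
      + 2 * (αk k * ⟪M (x k - xs), x k - x (k - 1)⟫)
      + αk k ^ 2 * ⟪M (x k - x (k - 1)), x k - x (k - 1)⟫ := by
    rw [hyxs, sa_quad M hMsa]
    simp only [map_smul, real_inner_smul_left, real_inner_smul_right]
    ring
  have Ecross : 2 * ⟪M (x k - xs), x k - x (k - 1)⟫ = ⟪M (x k - xs), x k - xs⟫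
      - ⟪M (x (k - 1) - xs), x (k - 1) - xs⟫
      + ⟪M (x k - x (k - 1)), x k - x (k - 1)⟫ := by
    have e : x (k - 1) - xs + (x k - x (k - 1)) = x k - xs := by abel
    have h := sa_quad M hMsa (x (k - 1) - xs) (x k - x (k - 1))
    rw [e] at h
    have h2 : ⟪M (x k - xs), x k - x (k - 1)⟫ = ⟪M (x (k - 1) - xs), x k - x (k - 1)⟫
        + ⟪M (x k - x (k - 1)), x k - x (k - 1)⟫ := by
      rw [show x k - xs = x (k - 1) - xs + (x k - x (k - 1)) from e.symm, map_add,
        inner_add_left]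
    linarith
  have Ey2' : ⟪M (y k - xs), y k - xs⟫ = ⟪M (x k - xs), x k - xs⟫
      + αk k * (⟪M (x k - xs), x k - xs⟫ - ⟪M (x (k - 1) - xs), x (k - 1) - xs⟫
        + ⟪M (x k - x (k - 1)), x k - x (k - 1)⟫)
      + αk k ^ 2 * ⟪M (x k - x (k - 1)), x k - x (k - 1)⟫ := by
    have h := congrArg (fun t => αk k * t) Ecross
    nlinarith [Ey2, h]
  obtain ⟨hα0, hα1⟩ := hαk k
  have hMd := hM0 (x k - x (k - 1))
  have hsq : αk k ^ 2 * ⟪M (x k - x (k - 1)), x k - x (k - 1)⟫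
      ≤ αk k * ⟪M (x k - x (k - 1)), x k - x (k - 1)⟫ := by
    nlinarith [mul_nonneg (mul_nonneg hα0 (sub_nonneg.2 hα1)) hMd]
  simp only [hφ]
  linarith [key2, Ey, Ey2', hsq]
end

section
/- Let α ∈ [0,1), let (φ_k)_{k≥0} be a sequence of nonnegative real numbers with φ_0 = φ_{−1} (i.e. extended by φ_{−1} := φ_0), set θ_k = max(0, φ_k − φ_{k−1}), and let (δ_k)_{k≥1} be nonnegative reals with ∑_{k≥1} δ_k < ∞. If θ_{k+1} ≤ α θ_k + δ_k for all k ≥ 1, then ∑_{k≥1} θ_k ≤ (θ_1 + ∑_{k≥1} δ_k)/(1 − α) < ∞ and the sequence (φ_k) converges. -/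
open Filter Topology

/-- the real-sequence argument in the convergence proof of the inertial
forward–backward algorithm.  Here `φ (k-1)` uses truncated subtraction, so `φ 0 - φ (0-1) = 0`,
encoding the convention `φ₋₁ = φ₀`.  The sums `∑_{k≥1}` are written as `∑' k, · (k+1)`. -/
theorem stmt3 (α : ℝ) (hα0 : 0 ≤ α) (hα1 : α < 1)
    (φ θ δ : ℕ → ℝ)
    (hφ : ∀ k, 0 ≤ φ k)
    (hθ : ∀ k, θ k = max 0 (φ k - φ (k - 1)))
    (hδ : ∀ k, 1 ≤ k → 0 ≤ δ k)
    (hδsum : Summable (fun k : ℕ => δ (k + 1)))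
    (hrec : ∀ k, 1 ≤ k → θ (k + 1) ≤ α * θ k + δ k) :
    Summable (fun k : ℕ => θ (k + 1)) ∧
      (∑' k : ℕ, θ (k + 1)) ≤ (θ 1 + ∑' k : ℕ, δ (k + 1)) / (1 - α) ∧
      ∃ l : ℝ, Tendsto φ atTop (𝓝 l) := by
  have hθnn : ∀ k, 0 ≤ θ k := fun k => by rw [hθ]; exact le_max_left _ _
  set D : ℝ := ∑' k : ℕ, δ (k + 1) with hDdef
  have hD0 : 0 ≤ D := tsum_nonneg fun k => hδ (k + 1) (by omega)
  have h1α : (0:ℝ) < 1 - α := by linarith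
  set T : ℕ → ℝ := fun n => ∑ i ∈ Finset.range n, θ (i + 1) with hTdef
  have hTmono : Monotone T := fun a b hab =>
    Finset.sum_le_sum_of_subset_of_nonneg (Finset.range_subset_range.2 hab)
      (fun i _ _ => hθnn (i + 1))
  have hbound : ∀ n, T n ≤ (θ 1 + D) / (1 - α) := by
    intro n
    cases n with
    | zero =>
        simp only [hTdef, Finset.range_zero, Finset.sum_empty]
        exact div_nonneg (by linarith [hθnn 1]) h1α.le
    | succ m =>
        have key : T (m + 1) ≤ θ 1 + (α * T (m + 1) + D) := by
          have h1 : T (m + 1) = (∑ i ∈ Finset.range m, θ (i + 1 + 1)) + θ 1 :=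
            Finset.sum_range_succ' (fun i => θ (i + 1)) m
          have h2 : ∑ i ∈ Finset.range m, θ (i + 1 + 1)
              ≤ ∑ i ∈ Finset.range m, (α * θ (i + 1) + δ (i + 1)) :=
            Finset.sum_le_sum fun i _ => hrec (i + 1) (by omega)
          have h3 : ∑ i ∈ Finset.range m, (α * θ (i + 1) + δ (i + 1))
              = α * T m + ∑ i ∈ Finset.range m, δ (i + 1) := by
            rw [Finset.sum_add_distrib, Finset.mul_sum]
          have h4 : ∑ i ∈ Finset.range m, δ (i + 1) ≤ D :=
            Summable.sum_le_tsum _ (fun i _ => hδ (i + 1) (by omega)) hδsum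
          have h5 : α * T m ≤ α * T (m + 1) :=
            mul_le_mul_of_nonneg_left (hTmono (Nat.le_succ m)) hα0
          linarith
        rw [le_div_iff₀ h1α]
        linarith
  have hsum : Summable (fun k : ℕ => θ (k + 1)) :=
    summable_of_sum_range_le (fun k => hθnn (k + 1)) hbound
  have htsum : (∑' k : ℕ, θ (k + 1)) ≤ (θ 1 + D) / (1 - α) :=
    Summable.tsum_le_of_sum_range_le hsum hbound
  refine ⟨hsum, htsum, ?_⟩
  -- convergence of φ
  set ψ : ℕ → ℝ := fun n => φ n - T n with hψdef
  have hψanti : Antitone ψ := antitone_nat_of_succ_le fun n => by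
    have hstep : φ (n + 1) - φ n ≤ θ (n + 1) := by
      rw [hθ]; simp only [Nat.add_sub_cancel]; exact le_max_right _ _
    have : T (n + 1) = T n + θ (n + 1) := Finset.sum_range_succ _ n
    simp only [hψdef]
    linarith
  have hψbdd : ∀ n, -(∑' k : ℕ, θ (k + 1)) ≤ ψ n := fun n => by
    have hTle : T n ≤ ∑' k : ℕ, θ (k + 1) :=
      Summable.sum_le_tsum _ (fun i _ => hθnn (i + 1)) hsum
    have := hφ n
    simp only [hψdef]
    linarith
  have hψconv : ∃ l, Tendsto ψ atTop (𝓝 l) := by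
    refine ⟨⨅ n, ψ n, tendsto_atTop_ciInf hψanti ⟨-(∑' k : ℕ, θ (k + 1)), ?_⟩⟩
    rintro x ⟨n, rfl⟩
    exact hψbdd n
  obtain ⟨l, hl⟩ := hψconv
  have hT : Tendsto T atTop (𝓝 (∑' k : ℕ, θ (k + 1))) := hsum.hasSum.tendsto_sum_nat
  refine ⟨l + ∑' k : ℕ, θ (k + 1), ?_⟩
  have : φ = fun n => ψ n + T n := by funext n; simp [hψdef]
  rw [this]
  exact hl.add hT
end

section
/- Let X be a real Hilbert space, let L be a positive definite bounded linear operator on X, let B : X → X, and let x* ∈ X be such that ⟨B(x) − B(x*), x − x*⟩ ≥ ⟨L⁻¹(B(x) − B(x*)), B(x) − B(x*)⟩ for all x ∈ X. Then for all y, z ∈ X, ⟨B(y) − B(x*), z − x*⟩ ≥ −¼⟨L(z − y), z − y⟩. -/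
open scoped RealInnerProductSpace

/-- if `B` is co-coercive with respect to `L⁻¹` relative to `{x*}`
(`Linv` denotes the inverse of the positive definite operator `L`), then
`⟨B(y) − B(x*), z − x*⟩ ≥ −¼⟨L(z − y), z − y⟩` for all `y, z`. -/
theorem stmt4 {X : Type*} [NormedAddCommGroup X] [InnerProductSpace ℝ X] [CompleteSpace X]
    (L Linv : X →L[ℝ] X)
    (hLsa : ∀ u v : X, ⟪L u, v⟫ = ⟪u, L v⟫)
    (hLpos : ∃ c > 0, ∀ z : X, c * ‖z‖ ^ 2 ≤ ⟪L z, z⟫)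
    (hLinv : ∀ z : X, L (Linv z) = z) (hLinv' : ∀ z : X, Linv (L z) = z)
    (B : X → X) (xs : X)
    (hcoco : ∀ x : X, ⟪Linv (B x - B xs), B x - B xs⟫ ≤ ⟪B x - B xs, x - xs⟫) :
    ∀ y z : X, -(1/4 : ℝ) * ⟪L (z - y), z - y⟫ ≤ ⟪B y - B xs, z - xs⟫ := by
  obtain ⟨c, hc, hpos⟩ := hLpos
  intro y z
  set w := B y - B xs with hwdef
  set u := Linv w with hudef
  set d := z - y with hddef
  have hw : L u = w := hLinv w
  have hnn : ∀ v : X, (0:ℝ) ≤ ⟪L v, v⟫ := fun v =>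
    le_trans (by positivity) (hpos v)
  have hkey : (0:ℝ) ≤ ⟪L (u + (1/2:ℝ) • d), u + (1/2:ℝ) • d⟫ := hnn _
  have hsym : ⟪L d, u⟫ = ⟪L u, d⟫ := by
    rw [hLsa, real_inner_comm]
  have hexp : ⟪L (u + (1/2:ℝ) • d), u + (1/2:ℝ) • d⟫
      = ⟪L u, u⟫ + ⟪L u, d⟫ + (1/4:ℝ) * ⟪L d, d⟫ := by
    simp only [map_add, map_smul, inner_add_left, inner_add_right,
      real_inner_smul_left, real_inner_smul_right]
    rw [hsym]; ring
  have h1 : -(1/4:ℝ) * ⟪L d, d⟫ ≤ ⟪L u, u⟫ + ⟪L u, d⟫ := by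
    nlinarith [hkey, hexp]
  have h2 : ⟪L u, u⟫ = ⟪Linv w, w⟫ := by
    rw [real_inner_comm, hw]
  have h3 : ⟪Linv w, w⟫ ≤ ⟪w, y - xs⟫ := hcoco y
  have h4 : ⟪w, z - xs⟫ = ⟪L u, d⟫ + ⟪w, y - xs⟫ := by
    rw [hw]
    have : z - xs = d + (y - xs) := by rw [hddef]; abel
    rw [this, inner_add_right]
  calc -(1/4:ℝ) * ⟪L d, d⟫ ≤ ⟪L u, u⟫ + ⟪L u, d⟫ := h1
    _ ≤ ⟪L u, d⟫ + ⟪w, y - xs⟫ := by rw [h2]; linarith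
    _ = ⟪w, z - xs⟫ := h4.symm
end

section
/- Let X and Y be real Hilbert spaces, K : X → Y a bounded linear operator, τ, σ > 0 and L_Q, L_P ≥ 0 with τL_Q < 2, σL_P < 2 and ‖K‖² < (1/τ − L_Q/2)(1/σ − L_P/2). Then there exists c > 0 such that for all x ∈ X and y ∈ Y: (1/τ − L_Q/2)‖x‖² − 2⟨Kx, y⟩ + (1/σ − L_P/2)‖y‖² ≥ c(‖x‖² + ‖y‖²). In particular, the block operator S(x, y) = ((1/τ − L_Q/2)x − K*y, −Kx + (1/σ − L_P/2)y) on X × Y is positive definite. -/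
open scoped RealInnerProductSpace

lemma stmt9_aux (a b k : ℝ) (ha : 0 < a) (hb : 0 < b) (hk : 0 ≤ k)
    (hK : k ^ 2 < a * b) :
    ∃ c > 0, ∀ s t : ℝ, 0 ≤ s → 0 ≤ t →
      c * (s ^ 2 + t ^ 2) ≤ a * s ^ 2 - 2 * (k * s * t) + b * t ^ 2 := by
  refine ⟨min (min a b / 2) ((a * b - k ^ 2) / (a + b)), ?_, ?_⟩
  · apply lt_min
    · have := lt_min ha hb
      positivity
    · apply div_pos (by nlinarith) (by linarith)
  · intro s t hs ht
    set c : ℝ := min (min a b / 2) ((a * b - k ^ 2) / (a + b)) with hc_def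
    have hc : 0 < c := by
      apply lt_min
      · have := lt_min ha hb
        positivity
      · apply div_pos (by nlinarith) (by linarith)
    have hmin : min a b / 2 ≤ a / 2 ∧ min a b / 2 ≤ b / 2 :=
      ⟨by have := min_le_left a b; linarith, by have := min_le_right a b; linarith⟩
    have hca : c ≤ a / 2 := le_trans (min_le_left _ _) hmin.1
    have hcb : c ≤ b / 2 := le_trans (min_le_left _ _) hmin.2
    have hcab : c * (a + b) ≤ a * b - k ^ 2 := by
      have h : c ≤ (a * b - k ^ 2) / (a + b) := min_le_right _ _
      calc c * (a + b) ≤ ((a * b - k ^ 2) / (a + b)) * (a + b) :=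
            mul_le_mul_of_nonneg_right h (by linarith)
      _ = a * b - k ^ 2 := by field_simp
    have hpq : k ^ 2 ≤ (a - c) * (b - c) := by nlinarith [sq_nonneg c]
    have hp : 0 < a - c := by linarith
    have hq : 0 < b - c := by linarith
    nlinarith [sq_nonneg ((a - c) * s - k * t), sq_nonneg t, mul_nonneg hs ht]

/-- positive definiteness of the block operator `S = M − ½L` arising in the
primal–dual forward–backward algorithm, expressed through its quadratic form: there is a
`c > 0` with `(1/τ − L_Q/2)‖x‖² − 2⟨Kx, y⟩ + (1/σ − L_P/2)‖y‖² ≥ c(‖x‖² + ‖y‖²)`. -/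
theorem stmt9 {X Y : Type*} [NormedAddCommGroup X] [InnerProductSpace ℝ X]
    [NormedAddCommGroup Y] [InnerProductSpace ℝ Y]
    (K : X →L[ℝ] Y) (τ σ LQ LP : ℝ)
    (hτ : 0 < τ) (hσ : 0 < σ) (hLQ : 0 ≤ LQ) (hLP : 0 ≤ LP)
    (hτLQ : τ * LQ < 2) (hσLP : σ * LP < 2)
    (hK : ‖K‖^2 < (1/τ - LQ/2) * (1/σ - LP/2)) :
    ∃ c > 0, ∀ (x : X) (y : Y),
      c * (‖x‖^2 + ‖y‖^2) ≤
        (1/τ - LQ/2) * ‖x‖^2 - 2 * ⟪K x, y⟫ + (1/σ - LP/2) * ‖y‖^2 := by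
  have hτ' : τ * (1/τ) = 1 := by field_simp
  have hσ' : σ * (1/σ) = 1 := by field_simp
  have h1τ : 0 < 1/τ := by positivity
  have h1σ : 0 < 1/σ := by positivity
  have ha : 0 < 1/τ - LQ/2 := by nlinarith [mul_pos hτ h1τ]
  have hb : 0 < 1/σ - LP/2 := by nlinarith [mul_pos hσ h1σ]
  obtain ⟨c, hc, h⟩ := stmt9_aux _ _ ‖K‖ ha hb (norm_nonneg K) hK
  refine ⟨c, hc, fun x y => ?_⟩
  have hinner : ⟪K x, y⟫ ≤ ‖K‖ * ‖x‖ * ‖y‖ := by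
    calc ⟪K x, y⟫ ≤ ‖K x‖ * ‖y‖ := real_inner_le_norm _ _
    _ ≤ (‖K‖ * ‖x‖) * ‖y‖ :=
        mul_le_mul_of_nonneg_right (K.le_opNorm x) (norm_nonneg y)
    _ = ‖K‖ * ‖x‖ * ‖y‖ := by ring
  have := h ‖x‖ ‖y‖ (norm_nonneg x) (norm_nonneg y)
  linarith
end

section
/- Let k ≥ 0 (playing the role of ‖K‖), L_Q > 0, L_P > 0, γ, δ ∈ (0,2) and r > 0, and set τ = 1/(kr + L_Q/γ) and σ = 1/(k/r + L_P/δ). Let m = max(γ, δ), let ε ∈ (0, (9 − 4m)/(2m)), and let α satisfy 0 ≤ α ≤ 1 + (√(9 − 4m − 2εm) − 3)/m. Then: (a) τL_Q < 2 and σL_P < 2; (b) k² < (1/τ − L_Q/2)(1/σ − L_P/2); (c) (1 − 3α − ε)/τ ≥ ((1 − α)²/2)L_Q, (1 − 3α − ε)/σ ≥ ((1 − α)²/2)L_P, and ((1 − 3α − ε)/τ − ((1 − α)²/2)L_Q)·((1 − 3α − ε)/σ − ((1 − α)²/2)L_P) ≥ (1 − 3α − ε)²k². -/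
set_option maxHeartbeats 1000000 in
/-- the explicit step-size and extrapolation-parameter rules for the
inertial primal–dual forward–backward algorithm satisfy the convergence conditions. -/
theorem stmt10 (k LQ LP γ δ r ε α : ℝ)
    (hk : 0 ≤ k) (hLQ : 0 < LQ) (hLP : 0 < LP)
    (hγ : γ ∈ Set.Ioo (0:ℝ) 2) (hδ : δ ∈ Set.Ioo (0:ℝ) 2) (hr : 0 < r)
    (τ σ m : ℝ) (hτ : τ = 1/(k*r + LQ/γ)) (hσ : σ = 1/(k/r + LP/δ))
    (hm : m = max γ δ)
    (hε : ε ∈ Set.Ioo (0:ℝ) ((9 - 4*m) / (2*m)))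
    (hα0 : 0 ≤ α) (hα1 : α ≤ 1 + (Real.sqrt (9 - 4*m - 2*ε*m) - 3) / m) :
    (τ * LQ < 2 ∧ σ * LP < 2) ∧
      k^2 < (1/τ - LQ/2) * (1/σ - LP/2) ∧
      ((1 - 3*α - ε)/τ ≥ (1 - α)^2/2 * LQ ∧
        (1 - 3*α - ε)/σ ≥ (1 - α)^2/2 * LP ∧
        ((1 - 3*α - ε)/τ - (1 - α)^2/2 * LQ) * ((1 - 3*α - ε)/σ - (1 - α)^2/2 * LP)
          ≥ (1 - 3*α - ε)^2 * k^2) := by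
  obtain ⟨hγ0, hγ2⟩ := hγ
  obtain ⟨hδ0, hδ2⟩ := hδ
  obtain ⟨hε0, hε1⟩ := hε
  have hm0 : 0 < m := by rw [hm]; exact lt_max_of_lt_left hγ0
  have hm2 : m < 2 := by rw [hm]; exact max_lt hγ2 hδ2
  have hγm : γ ≤ m := hm ▸ le_max_left _ _
  have hδm : δ ≤ m := hm ▸ le_max_right _ _
  -- key quadratic inequality
  have hkey : m * (1 - α)^2 ≤ 2 * (1 - 3*α - ε) := by
    have h2m : 0 < 2*m := by linarith
    have hεm : ε * (2*m) < 9 - 4*m := (lt_div_iff₀ h2m).mp hε1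
    have hD0 : 0 < 9 - 4*m - 2*ε*m := by nlinarith
    have hsq0 : 0 ≤ Real.sqrt (9 - 4*m - 2*ε*m) := Real.sqrt_nonneg _
    have hsqD : Real.sqrt (9 - 4*m - 2*ε*m) ^ 2 = 9 - 4*m - 2*ε*m :=
      Real.sq_sqrt hD0.le
    have hsq3 : Real.sqrt (9 - 4*m - 2*ε*m) < 3 := by nlinarith
    have hmt : 3 - Real.sqrt (9 - 4*m - 2*ε*m) ≤ m * (1 - α) := by
      have h := (le_div_iff₀ hm0).mp (by linarith : α - 1 ≤ (Real.sqrt (9 - 4*m - 2*ε*m) - 3)/m)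
      nlinarith
    have hmtle : m * (1 - α) ≤ m := by nlinarith
    have hsqr : (3 - m * (1 - α))^2 ≤ 9 - 4*m - 2*ε*m := by nlinarith
    have h1 : m * (m * (1 - α)^2 - 2 * (1 - 3*α - ε)) ≤ m * 0 := by nlinarith
    have h2 := le_of_mul_le_mul_left h1 hm0
    linarith
  clear hα0 hα1 hm hε0 hε1 hm2
  have hs0 : 0 ≤ 1 - 3*α - ε := by
    have h := mul_nonneg hm0.le (sq_nonneg (1 - α))
    linarith
  -- step sizes
  have hq : 0 < LQ / γ := div_pos hLQ hγ0
  have hp : 0 < LP / δ := div_pos hLP hδ0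
  have hkr : 0 ≤ k * r := mul_nonneg hk hr.le
  have hkr' : 0 ≤ k / r := div_nonneg hk hr.le
  have hτden : 0 < k*r + LQ/γ := by linarith
  have hσden : 0 < k/r + LP/δ := by linarith
  have hτ0 : 0 < τ := hτ ▸ by positivity
  have hσ0 : 0 < σ := hσ ▸ by positivity
  have hτinv : 1/τ = k*r + LQ/γ := by rw [hτ, one_div_one_div]
  have hσinv : 1/σ = k/r + LP/δ := by rw [hσ, one_div_one_div]
  have hqγ : LQ / γ * γ = LQ := div_mul_cancel₀ _ hγ0.ne'
  have hpδ : LP / δ * δ = LP := div_mul_cancel₀ _ hδ0.ne'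
  have hq2 : LQ < 2 * (LQ/γ) := by
    have h := mul_lt_mul_of_pos_left hγ2 hq
    linarith [hqγ]
  have hp2 : LP < 2 * (LP/δ) := by
    have h := mul_lt_mul_of_pos_left hδ2 hp
    linarith [hpδ]
  -- (a)
  have ha1 : τ * LQ < 2 := by
    rw [hτ, div_mul_eq_mul_div, one_mul, div_lt_iff₀ hτden]
    linarith
  have ha2 : σ * LP < 2 := by
    rw [hσ, div_mul_eq_mul_div, one_mul, div_lt_iff₀ hσden]
    linarith
  -- (b)
  have hA : 0 < LQ/γ - LQ/2 := by linarith
  have hB : 0 < LP/δ - LP/2 := by linarith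
  have hb : k^2 < (1/τ - LQ/2) * (1/σ - LP/2) := by
    rw [hτinv, hσinv]
    have hkk : k * r * (k / r) = k^2 := by field_simp
    nlinarith [mul_pos hA hB, mul_nonneg hkr hB.le, mul_nonneg hA.le hkr']
  -- (c)
  have hsτ : (1 - 3*α - ε)/τ = (1 - 3*α - ε) * (k*r + LQ/γ) := by
    rw [hτ]; field_simp
  have hsσ : (1 - 3*α - ε)/σ = (1 - 3*α - ε) * (k/r + LP/δ) := by
    rw [hσ]; field_simp
  have hc1' : (1 - 3*α - ε) * (LQ/γ) ≥ (1 - α)^2/2 * LQ := by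
    nlinarith [mul_nonneg (mul_nonneg (by linarith : (0:ℝ) ≤ m - γ) (sq_nonneg (1 - α))) hq.le,
      mul_nonneg (by linarith : (0:ℝ) ≤ 2*(1 - 3*α - ε) - m*(1-α)^2) hq.le]
  have hc2' : (1 - 3*α - ε) * (LP/δ) ≥ (1 - α)^2/2 * LP := by
    nlinarith [mul_nonneg (mul_nonneg (by linarith : (0:ℝ) ≤ m - δ) (sq_nonneg (1 - α))) hp.le,
      mul_nonneg (by linarith : (0:ℝ) ≤ 2*(1 - 3*α - ε) - m*(1-α)^2) hp.le]
  have hX : (1 - 3*α - ε)/τ - (1 - α)^2/2 * LQ ≥ (1 - 3*α - ε) * (k*r) := by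
    rw [hsτ]; nlinarith
  have hY : (1 - 3*α - ε)/σ - (1 - α)^2/2 * LP ≥ (1 - 3*α - ε) * (k/r) := by
    rw [hsσ]; nlinarith
  have hc1 : (1 - 3*α - ε)/τ ≥ (1 - α)^2/2 * LQ := by
    nlinarith [mul_nonneg hs0 hkr]
  have hc2 : (1 - 3*α - ε)/σ ≥ (1 - α)^2/2 * LP := by
    nlinarith [mul_nonneg hs0 hkr']
  have hc3 : ((1 - 3*α - ε)/τ - (1 - α)^2/2 * LQ) * ((1 - 3*α - ε)/σ - (1 - α)^2/2 * LP)
      ≥ (1 - 3*α - ε)^2 * k^2 := by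
    have hX0 : 0 ≤ (1 - 3*α - ε) * (k*r) := mul_nonneg hs0 hkr
    have hY0 : 0 ≤ (1 - 3*α - ε) * (k/r) := mul_nonneg hs0 hkr'
    have h := mul_le_mul hX hY hY0 (by linarith)
    have hkk : (1 - 3*α - ε) * (k*r) * ((1 - 3*α - ε) * (k/r)) = (1 - 3*α - ε)^2 * k^2 := by
      field_simp
    linarith [hkk ▸ h]
  exact ⟨⟨ha1, ha2⟩, hb, hc1, hc2, hc3⟩
end

section
/- Let K be a real m×n matrix, let G : ℝⁿ → ℝ and F* : ℝᵐ → ℝ be convex, let Q : ℝⁿ → ℝ and P* : ℝᵐ → ℝ be convex and differentiable, and let D (n×n) and E (m×m) be symmetric positive definite matrices such that ⟨∇Q(x) − ∇Q(x'), x − x'⟩ ≥ ⟨D⁻¹(∇Q(x) − ∇Q(x')), ∇Q(x) − ∇Q(x')⟩ for all x, x' ∈ ℝⁿ and ⟨∇P*(y) − ∇P*(y'), y − y'⟩ ≥ ⟨E⁻¹(∇P*(y) − ∇P*(y')), ∇P*(y) − ∇P*(y')⟩ for all y, y' ∈ ℝᵐ. Let T (n×n) and Σ (m×m) be symmetric positive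 definite matrices such that T⁻¹ − D/2 and Σ⁻¹ − E/2 are positive definite and ‖(Σ⁻¹ − E/2)^{−1/2} K (T⁻¹ − D/2)^{−1/2} x‖ ≤ c‖x‖ for all x and some c < 1. Assume a saddle point exists, let (α_k) be a nondecreasing sequence in [0, α] with α < 1, and let (x^k, y^k) be preconditioned inertial primal–dual iterates. If ∑_{k≥1} α_k(⟨T⁻¹(x^k − x^{k−1}), x^k − x^{k−1}⟩ − 2⟨K(x^k − x^{k−1}), y^k − y^{k−1}⟩ + ⟨Σ⁻¹(y^k − y^{k−1}), y^k − y^{k−1}⟩) < ∞, then (x^k, y^k) converges to a saddle point (x*, y*). -/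
/-!
Write `‖(u, v)‖²_M` for the quadratic form of the block operator `M = [[T⁻¹, -Kᵀ], [-K, Σ⁻¹]]`,
which the step-size conditions make coercive, even after subtracting `½ diag(D, E)`. For a saddle
point `z`, monotonicity of `∂G` and `∂F*` together with the cocoercivity of `∇Q` and `∇P*` (through
Young's inequality in the metrics `D⁻¹`, `D`) give, for `φₖ = ‖(xᵏ, yᵏ) - z‖²_M`, the inertial
Fejér inequality

  `φₖ₊₁ + ‖(ξᵏ, ζᵏ) - (xᵏ⁺¹, yᵏ⁺¹)‖²_{M - ½ diag(D,E)}`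
  `  ≤ φₖ + αₖ (φₖ - φₖ₋₁) + 2 αₖ ‖(xᵏ, yᵏ) - (xᵏ⁻¹, yᵏ⁻¹)‖²_M`.

By the Alvarez–Attouch lemma `φₖ` converges and the residuals are summable, so the iterates are
bounded and their increments vanish; since the graph of a subdifferential is closed, every cluster
point is a saddle point. Choosing `z` to be a cluster point, `φₖ → 0` along a subsequence, hence
along the whole sequence.
-/

open scoped RealInnerProductSpace
open Filter Topology Matrix

/-- The subdifferential of a convex function. -/
def subdiff {E : Type*} [NormedAddCommGroup E] [InnerProductSpace ℝ E]
    (f : E → ℝ) (x : E) : Set E :=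
  {u | ∀ z, f x + ⟪u, z - x⟫ ≤ f z}

open scoped ComplexOrder in
/-- The square root of a positive semidefinite matrix, with its definition from the
older Mathlib (removed since). -/
noncomputable def Matrix.PosSemidef.sqrt {n 𝕜 : Type*} [Fintype n] [RCLike 𝕜] [DecidableEq n]
    {A : Matrix n n 𝕜} (hA : A.PosSemidef) : Matrix n n 𝕜 :=
  hA.1.eigenvectorUnitary.1 * diagonal ((↑) ∘ (√·) ∘ hA.1.eigenvalues) *
    (star hA.1.eigenvectorUnitary : Matrix n n 𝕜)

lemma tendsto_zero_of_le_mul_add {a b : ℕ → ℝ} {α : ℝ} (hα0 : 0 ≤ α) (hα1 : α < 1)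
    (ha : ∀ k, 0 ≤ a k) (hb : Tendsto b atTop (𝓝 0)) (hrec : ∀ k, a (k + 1) ≤ α * a k + b k) :
    Tendsto a atTop (𝓝 0) := by
  rw [Metric.tendsto_atTop]
  intro ε hε
  obtain ⟨N, hN⟩ := Metric.tendsto_atTop.1 hb ((1 - α) * ε / 2) (by nlinarith)
  have hgeom : ∀ j, a (N + j) ≤ α ^ j * a N + ε / 2 := by
    intro j
    induction j with
    | zero => simp only [add_zero, pow_zero, one_mul]; linarith
    | succ j ih =>
      have hbj : b (N + j) < (1 - α) * ε / 2 :=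
        (abs_lt.1 (by simpa using hN (N + j) (by omega))).2
      calc a (N + (j + 1)) ≤ α * a (N + j) + b (N + j) := hrec (N + j)
        _ ≤ α * (α ^ j * a N + ε / 2) + (1 - α) * ε / 2 := by gcongr
        _ = α ^ (j + 1) * a N + ε / 2 := by ring
  obtain ⟨J, hJ⟩ := Metric.tendsto_atTop.1
    ((tendsto_pow_atTop_nhds_zero_of_lt_one hα0 hα1).mul_const (a N)) (ε / 2) (by positivity)
  refine ⟨N + J, fun k hk ↦ ?_⟩
  obtain ⟨j, rfl⟩ := Nat.exists_eq_add_of_le (le_of_add_le_left hk)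
  have hj : α ^ j * a N < ε / 2 := by
    have hJj := hJ j (by omega)
    rw [zero_mul, Real.dist_eq, sub_zero] at hJj
    exact (le_abs_self _).trans_lt hJj
  rw [Real.dist_eq, sub_zero, abs_of_nonneg (ha _)]
  linarith [hgeom j]

lemma summable_of_le_mul_add {θ s : ℕ → ℝ} {α : ℝ} (hα1 : α < 1) (hθ : ∀ k, 0 ≤ θ k)
    (hs : Summable s) (hs0 : ∀ k, 0 ≤ s k) (hrec : ∀ k, θ (k + 1) ≤ α * θ k + s k) :
    Summable θ := by
  refine summable_of_sum_range_le hθ (c := (θ 0 + ∑' k, s k) / (1 - α)) fun N ↦ ?_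
  have hsucc : ∑ k ∈ Finset.range (N + 1), θ k
      ≤ θ 0 + α * ∑ k ∈ Finset.range N, θ k + ∑' k, s k := by
    rw [Finset.sum_range_succ', Finset.mul_sum]
    have := Finset.sum_le_sum fun k (_ : k ∈ Finset.range N) ↦ hrec k
    rw [Finset.sum_add_distrib] at this
    linarith [hs.sum_le_tsum (Finset.range N) fun k _ ↦ hs0 k]
  have hmono : ∑ k ∈ Finset.range N, θ k ≤ ∑ k ∈ Finset.range (N + 1), θ k := by
    rw [Finset.sum_range_succ]; linarith [hθ N]
  rw [le_div_iff₀ (by linarith)]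
  linarith

lemma exists_tendsto_and_summable_of_le_add {φ r w : ℕ → ℝ} (hφ : ∀ k, 0 ≤ φ k)
    (hr : ∀ k, 0 ≤ r k) (hw : Summable w) (hw0 : ∀ k, 0 ≤ w k)
    (hrec : ∀ k, φ (k + 1) + r k ≤ φ k + w k) :
    (∃ L, Tendsto φ atTop (𝓝 L)) ∧ Summable r := by
  have hpartial : ∀ N, ∑ k ∈ Finset.range N, w k ≤ ∑' k, w k :=
    fun N ↦ hw.sum_le_tsum _ fun k _ ↦ hw0 k
  constructor
  · have hanti : Antitone fun k ↦ φ k - ∑ i ∈ Finset.range k, w i := by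
      refine antitone_nat_of_succ_le fun k ↦ ?_
      rw [Finset.sum_range_succ]
      linarith [hrec k, hr k]
    have hbdd : BddBelow (Set.range fun k ↦ φ k - ∑ i ∈ Finset.range k, w i) :=
      ⟨-∑' k, w k, by rintro _ ⟨k, rfl⟩; linarith [hφ k, hpartial k]⟩
    refine ⟨_, ((tendsto_atTop_ciInf hanti hbdd).add hw.hasSum.tendsto_sum_nat).congr
      fun k ↦ sub_add_cancel _ _⟩
  · refine summable_of_sum_range_le hr (c := φ 0 + ∑' k, w k) fun N ↦ ?_
    have htel : ∑ k ∈ Finset.range N, r k ≤ ∑ k ∈ Finset.range N, (φ k - φ (k + 1) + w k) :=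
      Finset.sum_le_sum fun k _ ↦ by linarith [hrec k]
    rw [Finset.sum_add_distrib, Finset.sum_range_sub'] at htel
    linarith [hφ N, hpartial N]

/-- Alvarez–Attouch: the positive parts of the increments `φ k - φ (k - 1)` are summable by
`summable_of_le_mul_add`, which reduces the claim to the non-inertial case. -/
lemma exists_tendsto_and_summable_of_inertial_le {φ r s αk : ℕ → ℝ} {α : ℝ} (hα1 : α < 1)
    (hαk : ∀ k, αk k ∈ Set.Icc 0 α) (hφ : ∀ k, 0 ≤ φ k) (hr : ∀ k, 0 ≤ r k)
    (hs : Summable s) (hs0 : ∀ k, 0 ≤ s k)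
    (hrec : ∀ k, φ (k + 1) + r k ≤ φ k + αk k * (φ k - φ (k - 1)) + s k) :
    (∃ L, Tendsto φ atTop (𝓝 L)) ∧ Summable r := by
  set θ : ℕ → ℝ := fun k ↦ max (φ k - φ (k - 1)) 0
  have hα0 : 0 ≤ α := (hαk 0).1.trans (hαk 0).2
  have hinertia : ∀ k, αk k * (φ k - φ (k - 1)) ≤ α * θ k := fun k ↦
    calc αk k * (φ k - φ (k - 1)) ≤ αk k * θ k :=
          mul_le_mul_of_nonneg_left (le_max_left _ _) (hαk k).1
      _ ≤ α * θ k := mul_le_mul_of_nonneg_right (hαk k).2 (le_max_right _ _)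
  have hθ0 : ∀ k, 0 ≤ α * θ k + s k := fun k ↦
    add_nonneg (mul_nonneg hα0 (le_max_right _ _)) (hs0 k)
  have hθ : Summable θ := by
    refine summable_of_le_mul_add hα1 (fun k ↦ le_max_right _ _) hs hs0 fun k ↦ ?_
    refine max_le ?_ (hθ0 k)
    rw [Nat.add_sub_cancel]
    linarith [hrec k, hr k, hinertia k]
  refine exists_tendsto_and_summable_of_le_add hφ hr ((hθ.mul_left α).add hs)
    hθ0 fun k ↦ ?_
  linarith [hrec k, hinertia k]

lemma tendsto_extrapolation_sub_zero {E : Type*} [SeminormedAddCommGroup E] [NormedSpace ℝ E]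
    {x ξ : ℕ → E} {αk : ℕ → ℝ} {α : ℝ} (hα1 : α < 1) (hαk : ∀ k, αk k ∈ Set.Icc 0 α)
    (hξ : ∀ k, ξ k = x k + αk k • (x k - x (k - 1)))
    (h : Tendsto (fun k ↦ ξ k - x (k + 1)) atTop (𝓝 0)) :
    Tendsto (fun k ↦ ξ k - x k) atTop (𝓝 0) := by
  have hα0 : 0 ≤ α := (hαk 0).1.trans (hαk 0).2
  have hinertia : ∀ k, ‖αk k • (x k - x (k - 1))‖ ≤ α * ‖x k - x (k - 1)‖ := fun k ↦ by
    rw [norm_smul, Real.norm_of_nonneg (hαk k).1]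
    exact mul_le_mul_of_nonneg_right (hαk k).2 (norm_nonneg _)
  have hΔ : Tendsto (fun k ↦ ‖x k - x (k - 1)‖) atTop (𝓝 0) := by
    refine tendsto_zero_of_le_mul_add hα0 hα1 (fun k ↦ norm_nonneg _) (tendsto_norm_zero.comp h)
      fun k ↦ ?_
    have hstep : x (k + 1) - x (k + 1 - 1) = αk k • (x k - x (k - 1)) - (ξ k - x (k + 1)) := by
      rw [Nat.add_sub_cancel, hξ]; abel
    rw [hstep]
    exact (norm_sub_le _ _).trans (add_le_add (hinertia k) le_rfl)
  refine squeeze_zero_norm (fun k ↦ ?_) (by simpa using hΔ.const_mul α)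
  rw [hξ, add_sub_cancel_left]
  exact hinertia k

section Subdifferential

variable {E : Type*} [NormedAddCommGroup E] [InnerProductSpace ℝ E] {f : E → ℝ}

lemma inner_sub_nonneg_of_mem_subdiff {u v x z : E} (hu : u ∈ subdiff f x)
    (hv : v ∈ subdiff f z) : 0 ≤ ⟪u - v, x - z⟫ := by
  have h₁ := hu z
  have h₂ := hv x
  rw [← neg_sub x z, inner_neg_right] at h₁
  rw [inner_sub_left]
  linarith

lemma mem_subdiff_of_tendsto {ι : Type*} {l : Filter ι} [l.NeBot] {x u : ι → E} {x₀ u₀ : E}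
    (hf : ContinuousAt f x₀) (hx : Tendsto x l (𝓝 x₀)) (hu : Tendsto u l (𝓝 u₀))
    (h : ∀ i, u i ∈ subdiff f (x i)) : u₀ ∈ subdiff f x₀ := fun z ↦
  le_of_tendsto ((hf.tendsto.comp hx).add (hu.inner (tendsto_const_nhds.sub hx)))
    (Eventually.of_forall fun i ↦ h i z)

end Subdifferential

section Cocoercive

variable {E : Type*} [NormedAddCommGroup E] [InnerProductSpace ℝ E]

def IsCocoercive (P : E →ₗ[ℝ] E) (g : E → E) : Prop :=
  ∀ x x', ⟪P (g x - g x'), g x - g x'⟫ ≤ ⟪g x - g x', x - x'⟫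

lemma IsCocoercive.continuous {P : E →ₗ[ℝ] E} {g : E → E} (hg : IsCocoercive P g) {ε : ℝ}
    (hε : 0 < ε) (hP : ∀ w, ε * ‖w‖ ^ 2 ≤ ⟪P w, w⟫) : Continuous g := by
  refine (LipschitzWith.of_dist_le' (K := ε⁻¹) fun x x' ↦ ?_).continuous
  rw [dist_eq_norm, dist_eq_norm, le_inv_mul_iff₀ hε]
  rcases (norm_nonneg (g x - g x')).eq_or_lt with h | h
  · rw [← h, mul_zero]; positivity
  refine le_of_mul_le_mul_right ?_ h
  calc ε * ‖g x - g x'‖ * ‖g x - g x'‖ = ε * ‖g x - g x'‖ ^ 2 := by ring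
    _ ≤ ⟪g x - g x', x - x'⟫ := (hP _).trans (hg x x')
    _ ≤ ‖x - x'‖ * ‖g x - g x'‖ := (real_inner_le_norm _ _).trans_eq (mul_comm _ _)

variable {P D : E →ₗ[ℝ] E}

lemma real_inner_le_young (hP : P.IsSymmetric) (hP0 : ∀ w, 0 ≤ ⟪P w, w⟫)
    (hPD : ∀ w, P (D w) = w) (g w : E) : ⟪g, w⟫ ≤ ⟪P g, g⟫ + 1 / 4 * ⟪D w, w⟫ := by
  have h := hP0 (g - (1 / 2 : ℝ) • D w)
  simp only [map_sub, map_smul, hPD, inner_sub_left, inner_sub_right, inner_smul_left,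
    inner_smul_right, RCLike.conj_to_real] at h
  rw [hP g (D w), hPD] at h
  linarith [real_inner_comm w g, real_inner_comm w (D w)]

lemma inner_map_self_nonneg_of_leftInverse (hP0 : ∀ w, 0 ≤ ⟪P w, w⟫)
    (hPD : ∀ w, P (D w) = w) (u : E) : 0 ≤ ⟪D u, u⟫ := by
  simpa only [hPD, real_inner_comm] using hP0 (D u)

end Cocoercive

section PrimalDualForm

variable {X Y : Type*} [NormedAddCommGroup X] [InnerProductSpace ℝ X]
  [NormedAddCommGroup Y] [InnerProductSpace ℝ Y]

/-- The quadratic form `‖(u, v)‖²_M` of the block operator `M = [[A, -K*], [-K, B]]`. -/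
def primalDualForm (A : X →ₗ[ℝ] X) (B : Y →ₗ[ℝ] Y) (K : X →ₗ[ℝ] Y) (u : X) (v : Y) : ℝ :=
  ⟪A u, u⟫ - 2 * ⟪K u, v⟫ + ⟪B v, v⟫

variable {A D : X →ₗ[ℝ] X} {B E : Y →ₗ[ℝ] Y} {K : X →ₗ[ℝ] Y}

lemma primalDualForm_sub_smul (c : ℝ) (u : X) (v : Y) :
    primalDualForm (A - c • D) (B - c • E) K u v
      = primalDualForm A B K u v - c * ⟪D u, u⟫ - c * ⟪E v, v⟫ := by
  simp only [primalDualForm, LinearMap.sub_apply, LinearMap.smul_apply, inner_sub_left,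
    real_inner_smul_left]
  ring

lemma primalDualForm_add_smul (hA : A.IsSymmetric) (hB : B.IsSymmetric) (t : ℝ) (p q : X)
    (r s : Y) :
    primalDualForm A B K (p + t • q) (r + t • s) = (1 + t) * primalDualForm A B K p r
      - t * primalDualForm A B K (p - q) (r - s) + t * (1 + t) * primalDualForm A B K q s := by
  simp only [primalDualForm, map_sub, map_add, map_smul, inner_sub_left, inner_sub_right,
    inner_add_left, inner_add_right, real_inner_smul_left, real_inner_smul_right, hA q p, hB s r]
  ring

lemma one_sub_mul_le_primalDualForm {c : ℝ} (hc : 0 ≤ c) (hA : ∀ u, 0 ≤ ⟪A u, u⟫)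
    (hB : ∀ v, 0 ≤ ⟪B v, v⟫) (hK : ∀ u v, |⟪K u, v⟫| ≤ c * √⟪A u, u⟫ * √⟪B v, v⟫)
    (u : X) (v : Y) : (1 - c) * (⟪A u, u⟫ + ⟪B v, v⟫) ≤ primalDualForm A B K u v := by
  have hKuv := (abs_le.1 (hK u v)).2
  rw [primalDualForm, ← Real.sq_sqrt (hA u), ← Real.sq_sqrt (hB v)]
  nlinarith [mul_nonneg hc (sq_nonneg (√⟪A u, u⟫ - √⟪B v, v⟫))]

lemma continuous_primalDualForm [FiniteDimensional ℝ X] [FiniteDimensional ℝ Y] :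
    Continuous fun p : X × Y ↦ primalDualForm A B K p.1 p.2 := by
  have hA := A.continuous_of_finiteDimensional
  have hB := B.continuous_of_finiteDimensional
  have hK := K.continuous_of_finiteDimensional
  unfold primalDualForm
  fun_prop

lemma tendsto_zero_of_primalDualForm_tendsto_zero {δ : ℝ} (hδ : 0 < δ)
    (hM : ∀ u v, δ * (‖u‖ ^ 2 + ‖v‖ ^ 2) ≤ primalDualForm A B K u v) {ι : Type*} {l : Filter ι}
    {u : ι → X} {v : ι → Y} (h : Tendsto (fun i ↦ primalDualForm A B K (u i) (v i)) l (𝓝 0)) :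
    Tendsto u l (𝓝 0) ∧ Tendsto v l (𝓝 0) := by
  have hsq : Tendsto (fun i ↦ √(‖u i‖ ^ 2 + ‖v i‖ ^ 2)) l (𝓝 0) := by
    refine Real.sqrt_zero ▸ (squeeze_zero (fun i ↦ by positivity) (fun i ↦ ?_)
      (by simpa using h.div_const δ)).sqrt
    rw [le_div_iff₀ hδ, mul_comm]
    exact hM _ _
  refine ⟨tendsto_zero_iff_norm_tendsto_zero.2 (squeeze_zero (fun _ ↦ norm_nonneg _)
      (fun i ↦ ?_) hsq), tendsto_zero_iff_norm_tendsto_zero.2 (squeeze_zero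
      (fun _ ↦ norm_nonneg _) (fun i ↦ ?_) hsq)⟩ <;>
    exact Real.le_sqrt_of_sq_le (by nlinarith [sq_nonneg ‖u i‖, sq_nonneg ‖v i‖])

lemma exists_subseq_tendsto_of_bddAbove_primalDualForm [FiniteDimensional ℝ X]
    [FiniteDimensional ℝ Y]
    {δ : ℝ} (hδ : 0 < δ) (hM : ∀ u v, δ * (‖u‖ ^ 2 + ‖v‖ ^ 2) ≤ primalDualForm A B K u v)
    {x : ℕ → X} {y : ℕ → Y} {xs : X} {ys : Y}
    (hb : BddAbove (Set.range fun k ↦ primalDualForm A B K (x k - xs) (y k - ys))) :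
    ∃ (x₀ : X) (y₀ : Y) (κ : ℕ → ℕ), StrictMono κ ∧ Tendsto (x ∘ κ) atTop (𝓝 x₀) ∧
      Tendsto (y ∘ κ) atTop (𝓝 y₀) := by
  obtain ⟨b, hb⟩ := hb
  have hball (k : ℕ) :
      (x k, y k) ∈ Metric.closedBall xs √(b / δ) ×ˢ Metric.closedBall ys √(b / δ) := by
    have h := (hM _ _).trans (hb ⟨k, rfl⟩)
    simp only [Set.mem_prod, Metric.mem_closedBall, dist_eq_norm]
    constructor <;> refine Real.le_sqrt_of_sq_le ((le_div_iff₀ hδ).2 ?_) <;>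
      nlinarith [sq_nonneg ‖x k - xs‖, sq_nonneg ‖y k - ys‖]
  obtain ⟨p, -, κ, hκ, hp⟩ := tendsto_subseq_of_bounded
    (Metric.isBounded_closedBall.prod Metric.isBounded_closedBall) hball
  exact ⟨p.1, p.2, κ, hκ, (continuous_fst.tendsto p).comp hp, (continuous_snd.tendsto p).comp hp⟩

lemma tendsto_of_tendsto_primalDualForm_of_subseq [FiniteDimensional ℝ X] [FiniteDimensional ℝ Y]
    {δ : ℝ} (hδ : 0 < δ) (hM : ∀ u v, δ * (‖u‖ ^ 2 + ‖v‖ ^ 2) ≤ primalDualForm A B K u v)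
    {x : ℕ → X} {y : ℕ → Y} {x₀ : X} {y₀ : Y} {L : ℝ}
    (hL : Tendsto (fun k ↦ primalDualForm A B K (x k - x₀) (y k - y₀)) atTop (𝓝 L)) {κ : ℕ → ℕ}
    (hκ : Tendsto κ atTop atTop) (hx : Tendsto (x ∘ κ) atTop (𝓝 x₀))
    (hy : Tendsto (y ∘ κ) atTop (𝓝 y₀)) : Tendsto x atTop (𝓝 x₀) ∧ Tendsto y atTop (𝓝 y₀) := by
  have hL0 : L = 0 := by
    have hxy : Tendsto (fun j ↦ (x (κ j) - x₀, y (κ j) - y₀)) atTop (𝓝 (0, 0)) := by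
      simpa using (hx.sub_const x₀).prodMk_nhds (hy.sub_const y₀)
    have h0 : primalDualForm A B K 0 0 = 0 := by simp [primalDualForm]
    refine tendsto_nhds_unique (hL.comp hκ) ?_
    rw [← h0]
    exact (continuous_primalDualForm.tendsto (0, 0)).comp hxy
  obtain ⟨hx, hy⟩ := tendsto_zero_of_primalDualForm_tendsto_zero hδ hM (hL0 ▸ hL)
  exact ⟨by simpa using hx.add_const x₀, by simpa using hy.add_const y₀⟩

end PrimalDualForm

section InertialPrimalDual

variable {X Y : Type*} [NormedAddCommGroup X] [InnerProductSpace ℝ X] [FiniteDimensional ℝ X]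
  [NormedAddCommGroup Y] [InnerProductSpace ℝ Y] [FiniteDimensional ℝ Y]

/-- Saddle points of `G + Q + ⟪K ·, ·⟫ - F* - P*`, with `F = F*`, `gQ = ∇Q`, `gP = ∇P*`. -/
def IsSaddlePoint (G : X → ℝ) (F : Y → ℝ) (gQ : X → X) (gP : Y → Y) (K : X →ₗ[ℝ] Y)
    (xs : X) (ys : Y) : Prop :=
  -(gQ xs + K.adjoint ys) ∈ subdiff G xs ∧ K xs - gP ys ∈ subdiff F ys

/-- Preconditioned inertial primal–dual iterates with `A = T⁻¹` and `B = Σ⁻¹`; the truncated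
subtraction `k - 1` encodes the convention `(x⁻¹, y⁻¹) = (x⁰, y⁰)`. -/
structure IsInertialPrimalDual (G : X → ℝ) (F : Y → ℝ) (gQ : X → X) (gP : Y → Y)
    (A : X →ₗ[ℝ] X) (B : Y →ₗ[ℝ] Y) (K : X →ₗ[ℝ] Y) (α : ℕ → ℝ) (x ξ : ℕ → X) (y ζ : ℕ → Y) :
    Prop where
  extrapolate_x : ∀ k, ξ k = x k + α k • (x k - x (k - 1))
  extrapolate_y : ∀ k, ζ k = y k + α k • (y k - y (k - 1))
  step_x : ∀ k, A (ξ k - x (k + 1)) - gQ (ξ k) - K.adjoint (ζ k) ∈ subdiff G (x (k + 1))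
  step_y : ∀ k,
    B (ζ k - y (k + 1)) - gP (ζ k) + K ((2 : ℝ) • x (k + 1) - ξ k) ∈ subdiff F (y (k + 1))

variable {G : X → ℝ} {F : Y → ℝ} {gQ : X → X} {gP : Y → Y} {A D Dinv : X →ₗ[ℝ] X}
  {B E Einv : Y →ₗ[ℝ] Y} {K : X →ₗ[ℝ] Y}

lemma primalDualForm_le_of_inner_nonneg (hA : A.IsSymmetric) (hB : B.IsSymmetric) {a b g : X}
    {c d p : Y} (h₁ : 0 ≤ ⟪A (a - b) - g - K.adjoint c, b⟫)
    (h₂ : 0 ≤ ⟪B (c - d) - p + K ((2 : ℝ) • b - a), d⟫)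
    (h₃ : -(1 / 4) * ⟪D (a - b), a - b⟫ ≤ ⟪g, b⟫) (h₄ : -(1 / 4) * ⟪E (c - d), c - d⟫ ≤ ⟪p, d⟫) :
    primalDualForm A B K b d
      + primalDualForm (A - (1 / 2 : ℝ) • D) (B - (1 / 2 : ℝ) • E) K (a - b) (c - d)
      ≤ primalDualForm A B K a c := by
  rw [primalDualForm_sub_smul]
  have hAab := hA a b
  have hBcd := hB c d
  simp only [primalDualForm, map_sub, map_smul, inner_sub_left, inner_sub_right, inner_add_left,
    real_inner_smul_left, LinearMap.adjoint_inner_left] at *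
  linarith [real_inner_comm (A b) a, real_inner_comm (B d) c, real_inner_comm (K b) c]

lemma primalDualForm_step_le (hA : A.IsSymmetric) (hB : B.IsSymmetric)
    (hD : ∀ g w, ⟪g, w⟫ ≤ ⟪Dinv g, g⟫ + 1 / 4 * ⟪D w, w⟫)
    (hE : ∀ g w, ⟪g, w⟫ ≤ ⟪Einv g, g⟫ + 1 / 4 * ⟪E w, w⟫)
    (hgQ : IsCocoercive Dinv gQ) (hgP : IsCocoercive Einv gP) {xs : X} {ys : Y}
    (hs : IsSaddlePoint G F gQ gP K xs ys) {ξ x' : X} {ζ y' : Y}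
    (hx : A (ξ - x') - gQ ξ - K.adjoint ζ ∈ subdiff G x')
    (hy : B (ζ - y') - gP ζ + K ((2 : ℝ) • x' - ξ) ∈ subdiff F y') :
    primalDualForm A B K (x' - xs) (y' - ys)
      + primalDualForm (A - (1 / 2 : ℝ) • D) (B - (1 / 2 : ℝ) • E) K (ξ - x') (ζ - y')
      ≤ primalDualForm A B K (ξ - xs) (ζ - ys) := by
  have hξ : (ξ - xs) - (x' - xs) = ξ - x' := sub_sub_sub_cancel_right _ _ _
  have hζ : (ζ - ys) - (y' - ys) = ζ - y' := sub_sub_sub_cancel_right _ _ _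
  rw [← hξ, ← hζ]
  refine primalDualForm_le_of_inner_nonneg hA hB (g := gQ ξ - gQ xs) (p := gP ζ - gP ys) ?_ ?_ ?_ ?_
  · convert inner_sub_nonneg_of_mem_subdiff hx hs.1 using 2
    rw [hξ]; simp only [map_sub]; abel
  · convert inner_sub_nonneg_of_mem_subdiff hy hs.2 using 2
    rw [hζ]; simp only [map_sub, map_smul]; module
  · linarith [hgQ ξ xs, hD (gQ ξ - gQ xs) ((ξ - xs) - (x' - xs)),
      inner_sub_right (𝕜 := ℝ) (gQ ξ - gQ xs) (ξ - xs) (x' - xs)]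
  · linarith [hgP ζ ys, hE (gP ζ - gP ys) ((ζ - ys) - (y' - ys)),
      inner_sub_right (𝕜 := ℝ) (gP ζ - gP ys) (ζ - ys) (y' - ys)]

namespace IsInertialPrimalDual

variable {αk : ℕ → ℝ} {x ξ : ℕ → X} {y ζ : ℕ → Y}

lemma exists_tendsto_primalDualForm_and_summable
    (hit : IsInertialPrimalDual G F gQ gP A B K αk x ξ y ζ)
    (hA : A.IsSymmetric) (hB : B.IsSymmetric)
    (hD : ∀ g w, ⟪g, w⟫ ≤ ⟪Dinv g, g⟫ + 1 / 4 * ⟪D w, w⟫)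
    (hE : ∀ g w, ⟪g, w⟫ ≤ ⟪Einv g, g⟫ + 1 / 4 * ⟪E w, w⟫)
    (hgQ : IsCocoercive Dinv gQ) (hgP : IsCocoercive Einv gP)
    (hS : ∀ u v, 0 ≤ primalDualForm (A - (1 / 2 : ℝ) • D) (B - (1 / 2 : ℝ) • E) K u v)
    (hM : ∀ u v, 0 ≤ primalDualForm A B K u v) {α : ℝ} (hα1 : α < 1) (hαk : ∀ k, αk k ∈ Set.Icc 0 α)
    (hsum : Summable fun k ↦ αk k * primalDualForm A B K (x k - x (k - 1)) (y k - y (k - 1)))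
    {xs : X} {ys : Y} (hs : IsSaddlePoint G F gQ gP K xs ys) :
    (∃ L, Tendsto (fun k ↦ primalDualForm A B K (x k - xs) (y k - ys)) atTop (𝓝 L)) ∧
      Summable fun k ↦ primalDualForm (A - (1 / 2 : ℝ) • D) (B - (1 / 2 : ℝ) • E) K
        (ξ k - x (k + 1)) (ζ k - y (k + 1)) := by
  refine exists_tendsto_and_summable_of_inertial_le hα1 hαk (fun k ↦ hM _ _) (fun k ↦ hS _ _)
    (hsum.mul_left 2) (fun k ↦ mul_nonneg zero_le_two (mul_nonneg (hαk k).1 (hM _ _)))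
    fun k ↦ ?_
  have hstep := primalDualForm_step_le hA hB hD hE hgQ hgP hs (hit.step_x k) (hit.step_y k)
  have hξ : ξ k - xs = (x k - xs) + αk k • (x k - x (k - 1)) := by rw [hit.extrapolate_x]; abel
  have hζ : ζ k - ys = (y k - ys) + αk k • (y k - y (k - 1)) := by rw [hit.extrapolate_y]; abel
  rw [hξ, hζ, primalDualForm_add_smul hA hB, sub_sub_sub_cancel_left,
    sub_sub_sub_cancel_left] at hstep
  have hαk1 : αk k * (1 + αk k) ≤ 2 * αk k := by nlinarith [(hαk k).1, (hαk k).2]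
  nlinarith [mul_le_mul_of_nonneg_right hαk1 (hM (x k - x (k - 1)) (y k - y (k - 1)))]

lemma isSaddlePoint_of_tendsto (hit : IsInertialPrimalDual G F gQ gP A B K αk x ξ y ζ)
    (hG : Continuous G) (hF : Continuous F) (hgQ : Continuous gQ)
    (hgP : Continuous gP) {κ : ℕ → ℕ} {x₀ : X} {y₀ : Y}
    (hξ : Tendsto (fun j ↦ ξ (κ j)) atTop (𝓝 x₀))
    (hx : Tendsto (fun j ↦ x (κ j + 1)) atTop (𝓝 x₀))
    (hζ : Tendsto (fun j ↦ ζ (κ j)) atTop (𝓝 y₀))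
    (hy : Tendsto (fun j ↦ y (κ j + 1)) atTop (𝓝 y₀)) :
    IsSaddlePoint G F gQ gP K x₀ y₀ := by
  have hA := A.continuous_of_finiteDimensional
  have hB := B.continuous_of_finiteDimensional
  have hK := K.continuous_of_finiteDimensional
  have hK' := K.adjoint.continuous_of_finiteDimensional
  constructor
  · refine mem_subdiff_of_tendsto hG.continuousAt hx ?_ fun j ↦ hit.step_x (κ j)
    have := (((hA.tendsto _).comp (hξ.sub hx)).sub ((hgQ.tendsto _).comp hξ)).sub
      ((hK'.tendsto _).comp hζ)
    rwa [sub_self, map_zero, zero_sub, ← neg_add'] at this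
  · refine mem_subdiff_of_tendsto hF.continuousAt hy ?_ fun j ↦ hit.step_y (κ j)
    have := (((hB.tendsto _).comp (hζ.sub hy)).sub ((hgP.tendsto _).comp hζ)).add
      ((hK.tendsto _).comp ((hx.const_smul (2 : ℝ)).sub hξ))
    rwa [sub_self, map_zero, zero_sub, two_smul, add_sub_cancel_right, neg_add_eq_sub] at this

theorem exists_isSaddlePoint_tendsto (hit : IsInertialPrimalDual G F gQ gP A B K αk x ξ y ζ)
    (hG : Continuous G) (hF : Continuous F) (hA : A.IsSymmetric) (hB : B.IsSymmetric)
    (hDinv : Dinv.IsSymmetric) (hEinv : Einv.IsSymmetric)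
    (hDinv_pos : ∃ ε > 0, ∀ w, ε * ‖w‖ ^ 2 ≤ ⟪Dinv w, w⟫)
    (hEinv_pos : ∃ ε > 0, ∀ w, ε * ‖w‖ ^ 2 ≤ ⟪Einv w, w⟫)
    (hDinv_left : ∀ w, Dinv (D w) = w) (hEinv_left : ∀ w, Einv (E w) = w)
    (hgQ : IsCocoercive Dinv gQ) (hgP : IsCocoercive Einv gP)
    (hS : ∃ δ > 0, ∀ u v,
      δ * (‖u‖ ^ 2 + ‖v‖ ^ 2) ≤ primalDualForm (A - (1 / 2 : ℝ) • D) (B - (1 / 2 : ℝ) • E) K u v)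
    {α : ℝ} (hα1 : α < 1) (hαk : ∀ k, αk k ∈ Set.Icc 0 α)
    (hsum : Summable fun k ↦ αk k * primalDualForm A B K (x k - x (k - 1)) (y k - y (k - 1)))
    (hsaddle : ∃ xs ys, IsSaddlePoint G F gQ gP K xs ys) :
    ∃ xs ys, IsSaddlePoint G F gQ gP K xs ys ∧ Tendsto x atTop (𝓝 xs) ∧
      Tendsto y atTop (𝓝 ys) := by
  obtain ⟨εD, hεD, hDinv_pos⟩ := hDinv_pos
  obtain ⟨εE, hεE, hEinv_pos⟩ := hEinv_pos
  obtain ⟨δ, hδ, hS⟩ := hS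
  have hDinv0 (w : X) : 0 ≤ ⟪Dinv w, w⟫ := (by positivity : 0 ≤ εD * ‖w‖ ^ 2).trans (hDinv_pos w)
  have hEinv0 (w : Y) : 0 ≤ ⟪Einv w, w⟫ := (by positivity : 0 ≤ εE * ‖w‖ ^ 2).trans (hEinv_pos w)
  have hM (u : X) (v : Y) : δ * (‖u‖ ^ 2 + ‖v‖ ^ 2) ≤ primalDualForm A B K u v := by
    linarith [hS u v,
      primalDualForm_sub_smul (A := A) (D := D) (B := B) (E := E) (K := K) (1 / 2) u v,
      inner_map_self_nonneg_of_leftInverse hDinv0 hDinv_left u,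
      inner_map_self_nonneg_of_leftInverse hEinv0 hEinv_left v]
  have hfejer {xs : X} {ys : Y} (hs : IsSaddlePoint G F gQ gP K xs ys) :=
    hit.exists_tendsto_primalDualForm_and_summable hA hB
      (real_inner_le_young hDinv hDinv0 hDinv_left) (real_inner_le_young hEinv hEinv0 hEinv_left)
      hgQ hgP
      (fun u v ↦ (by positivity : 0 ≤ δ * (‖u‖ ^ 2 + ‖v‖ ^ 2)).trans (hS u v))
      (fun u v ↦ (by positivity : 0 ≤ δ * (‖u‖ ^ 2 + ‖v‖ ^ 2)).trans (hM u v)) hα1 hαk hsum hs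
  obtain ⟨xs, ys, hs⟩ := hsaddle
  obtain ⟨⟨L, hL⟩, hres⟩ := hfejer hs
  obtain ⟨hxres, hyres⟩ := tendsto_zero_of_primalDualForm_tendsto_zero hδ hS hres.tendsto_atTop_zero
  obtain ⟨x₀, y₀, κ, hκ, hxκ, hyκ⟩ :=
    exists_subseq_tendsto_of_bddAbove_primalDualForm hδ hM hL.bddAbove_range
  have hξκ : Tendsto (fun j ↦ ξ (κ j)) atTop (𝓝 x₀) := by
    simpa using hxκ.add ((tendsto_extrapolation_sub_zero hα1 hαk hit.extrapolate_x hxres).comp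
      hκ.tendsto_atTop)
  have hζκ : Tendsto (fun j ↦ ζ (κ j)) atTop (𝓝 y₀) := by
    simpa using hyκ.add ((tendsto_extrapolation_sub_zero hα1 hαk hit.extrapolate_y hyres).comp
      hκ.tendsto_atTop)
  have hs₀ := hit.isSaddlePoint_of_tendsto hG hF (hgQ.continuous hεD hDinv_pos)
    (hgP.continuous hεE hEinv_pos) hξκ (by simpa using hξκ.sub (hxres.comp hκ.tendsto_atTop))
    hζκ (by simpa using hζκ.sub (hyres.comp hκ.tendsto_atTop))
  obtain ⟨⟨L₀, hL₀⟩, -⟩ := hfejer hs₀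
  exact ⟨x₀, y₀, hs₀,
    tendsto_of_tendsto_primalDualForm_of_subseq hδ hM hL₀ hκ.tendsto_atTop hxκ hyκ⟩

end IsInertialPrimalDual

end InertialPrimalDual

namespace Matrix

variable {ι κ : Type*} [Fintype ι]

lemma sqrt_dotProduct_self (w : ι → ℝ) : √(w ⬝ᵥ w) = ‖(WithLp.toLp 2 w : EuclideanSpace ℝ ι)‖ := by
  rw [EuclideanSpace.norm_eq]; simp [dotProduct, sq]

variable [DecidableEq ι]

lemma PosSemidef.sqrt_mul_self {A : Matrix ι ι ℝ} (hA : A.PosSemidef) :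
    hA.sqrt * hA.sqrt = A := by
  conv_rhs => rw [hA.1.spectral_theorem, Unitary.conjStarAlgAut_apply]
  simp only [PosSemidef.sqrt, Matrix.mul_assoc, ← Matrix.mul_assoc (star _ : Matrix ι ι ℝ),
    Unitary.coe_star_mul_self, Matrix.one_mul, ← Matrix.mul_assoc (diagonal _),
    diagonal_mul_diagonal]
  congr 3
  funext i
  simp [Real.mul_self_sqrt (hA.eigenvalues_nonneg i)]

lemma PosSemidef.isHermitian_sqrt {A : Matrix ι ι ℝ} (hA : A.PosSemidef) :
    hA.sqrt.IsHermitian :=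
  ((PosSemidef.diagonal fun i ↦ by simp [Real.sqrt_nonneg]).mul_mul_conjTranspose_same
    (hA.1.eigenvectorUnitary : Matrix ι ι ℝ)).1

lemma PosDef.isUnit_det_sqrt {A : Matrix ι ι ℝ} (hA : A.PosDef) :
    IsUnit hA.posSemidef.sqrt.det := by
  refine isUnit_iff_ne_zero.2 fun h ↦ hA.det_pos.ne ?_
  rw [← hA.posSemidef.sqrt_mul_self, det_mul, h, mul_zero]

lemma toEuclideanLin_mul_apply {μ : Type*} [Fintype κ] [DecidableEq κ] (A : Matrix μ κ ℝ)
    (B : Matrix κ ι ℝ) (u : EuclideanSpace ℝ ι) :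
    toEuclideanLin (A * B) u = toEuclideanLin A (toEuclideanLin B u) := by
  rw [toLpLin_mul]; rfl

lemma toEuclideanLin_nonsing_inv_apply {A : Matrix ι ι ℝ} (hA : IsUnit A.det)
    (u : EuclideanSpace ℝ ι) : toEuclideanLin A⁻¹ (toEuclideanLin A u) = u := by
  rw [← toEuclideanLin_mul_apply, nonsing_inv_mul _ hA, toLpLin_one, LinearMap.id_apply]

lemma PosSemidef.inner_toEuclideanLin_self {A : Matrix ι ι ℝ} (hA : A.PosSemidef)
    (u : EuclideanSpace ℝ ι) : ⟪toEuclideanLin A u, u⟫ = ‖toEuclideanLin hA.sqrt u‖ ^ 2 := by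
  rw [← real_inner_self_eq_norm_sq, ← (isSymmetric_toEuclideanLin_iff.2 hA.isHermitian_sqrt),
    ← toEuclideanLin_mul_apply, hA.sqrt_mul_self]

lemma PosDef.exists_pos_mul_norm_sq_le_inner {A : Matrix ι ι ℝ} (hA : A.PosDef) :
    ∃ ε > 0, ∀ u, ε * ‖u‖ ^ 2 ≤ ⟪toEuclideanLin A u, u⟫ := by
  have hinj : Function.Injective (toEuclideanLin hA.posSemidef.sqrt) :=
    Function.LeftInverse.injective (toEuclideanLin_nonsing_inv_apply hA.isUnit_det_sqrt)
  obtain ⟨C, hC, hCA⟩ := (toEuclideanLin hA.posSemidef.sqrt).injective_iff_antilipschitz.1 hinj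
  refine ⟨(C ^ 2)⁻¹, by positivity, fun u ↦ ?_⟩
  rw [hA.posSemidef.inner_toEuclideanLin_self, inv_mul_le_iff₀ (by positivity), ← mul_pow]
  exact pow_le_pow_left₀ (norm_nonneg _) (ZeroHomClass.bound_of_antilipschitz _ hCA u) 2

lemma abs_inner_toEuclideanLin_le [Fintype κ] [DecidableEq κ] {S : Matrix ι ι ℝ}
    {R : Matrix κ κ ℝ} (hS : S.PosDef) (hR : R.PosDef) (K : Matrix κ ι ℝ) {c : ℝ}
    (hc : ∀ w : ι → ℝ,
      √(((hR.posSemidef.sqrt⁻¹ * K * hS.posSemidef.sqrt⁻¹) *ᵥ w) ⬝ᵥ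
        ((hR.posSemidef.sqrt⁻¹ * K * hS.posSemidef.sqrt⁻¹) *ᵥ w)) ≤ c * √(w ⬝ᵥ w))
    (u : EuclideanSpace ℝ ι) (v : EuclideanSpace ℝ κ) :
    |⟪toEuclideanLin K u, v⟫| ≤ c * √⟪toEuclideanLin S u, u⟫ * √⟪toEuclideanLin R v, v⟫ := by
  set rS := hS.posSemidef.sqrt
  set rR := hR.posSemidef.sqrt
  have hW : ∀ w, ‖toEuclideanLin (rR⁻¹ * K * rS⁻¹) w‖ ≤ c * ‖w‖ := fun w ↦ by
    have hw := hc w.ofLp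
    rwa [sqrt_dotProduct_self, sqrt_dotProduct_self, WithLp.toLp_ofLp] at hw
  have hKu : toEuclideanLin (rR⁻¹ * K) u
      = toEuclideanLin (rR⁻¹ * K * rS⁻¹) (toEuclideanLin rS u) := by
    rw [← toEuclideanLin_mul_apply, Matrix.mul_assoc _ rS⁻¹,
      nonsing_inv_mul _ hS.isUnit_det_sqrt, Matrix.mul_one]
  have hK : ⟪toEuclideanLin K u, v⟫ = ⟪toEuclideanLin (rR⁻¹ * K) u, toEuclideanLin rR v⟫ := by
    rw [← isSymmetric_toEuclideanLin_iff.2 hR.posSemidef.isHermitian_sqrt,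
      ← toEuclideanLin_mul_apply, ← Matrix.mul_assoc, mul_nonsing_inv _ hR.isUnit_det_sqrt,
      Matrix.one_mul]
  rw [hK, hS.posSemidef.inner_toEuclideanLin_self, hR.posSemidef.inner_toEuclideanLin_self,
    Real.sqrt_sq (norm_nonneg _), Real.sqrt_sq (norm_nonneg _), hKu]
  calc _ ≤ ‖toEuclideanLin (rR⁻¹ * K * rS⁻¹) (toEuclideanLin rS u)‖ * ‖toEuclideanLin rR v‖ :=
        abs_real_inner_le_norm _ _
    _ ≤ c * ‖toEuclideanLin rS u‖ * ‖toEuclideanLin rR v‖ := by gcongr; exact hW _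

lemma exists_pos_mul_le_primalDualForm_toEuclideanLin [Fintype κ] [DecidableEq κ]
    {S : Matrix ι ι ℝ} {R : Matrix κ κ ℝ} (hS : S.PosDef) (hR : R.PosDef) (K : Matrix κ ι ℝ)
    {c : ℝ} (hc1 : c < 1)
    (hc : ∀ w : ι → ℝ,
      √(((hR.posSemidef.sqrt⁻¹ * K * hS.posSemidef.sqrt⁻¹) *ᵥ w) ⬝ᵥ
        ((hR.posSemidef.sqrt⁻¹ * K * hS.posSemidef.sqrt⁻¹) *ᵥ w)) ≤ c * √(w ⬝ᵥ w)) :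
    ∃ δ > 0, ∀ u v, δ * (‖u‖ ^ 2 + ‖v‖ ^ 2)
      ≤ primalDualForm (toEuclideanLin S) (toEuclideanLin R) (toEuclideanLin K) u v := by
  obtain ⟨εS, hεS, hS_pos⟩ := hS.exists_pos_mul_norm_sq_le_inner
  obtain ⟨εR, hεR, hR_pos⟩ := hR.exists_pos_mul_norm_sq_le_inner
  have hS0 (u : EuclideanSpace ℝ ι) : 0 ≤ ⟪toEuclideanLin S u, u⟫ := by
    rw [hS.posSemidef.inner_toEuclideanLin_self]; positivity
  have hR0 (v : EuclideanSpace ℝ κ) : 0 ≤ ⟪toEuclideanLin R v, v⟫ := by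
    rw [hR.posSemidef.inner_toEuclideanLin_self]; positivity
  have hK (u v) : |⟪toEuclideanLin K u, v⟫|
      ≤ max c 0 * √⟪toEuclideanLin S u, u⟫ * √⟪toEuclideanLin R v, v⟫ :=
    (abs_inner_toEuclideanLin_le hS hR K hc u v).trans (by gcongr; exact le_max_left _ _)
  refine ⟨(1 - max c 0) * min εS εR, mul_pos (by simp [hc1]) (lt_min hεS hεR), fun u v ↦ ?_⟩
  refine le_trans ?_ (one_sub_mul_le_primalDualForm (le_max_right _ _) hS0 hR0 hK u v)
  rw [mul_assoc]
  refine mul_le_mul_of_nonneg_left ?_ (by simp [hc1.le])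
  nlinarith [hS_pos u, hR_pos v, min_le_left εS εR, min_le_right εS εR, sq_nonneg ‖u‖,
    sq_nonneg ‖v‖]

end Matrix

theorem stmt13_general {n m : ℕ}
    (Kmat : Matrix (Fin m) (Fin n) ℝ)
    (G : EuclideanSpace ℝ (Fin n) → ℝ) (Fs : EuclideanSpace ℝ (Fin m) → ℝ)
    (hG : ConvexOn ℝ Set.univ G) (hFs : ConvexOn ℝ Set.univ Fs)
    (gQ : EuclideanSpace ℝ (Fin n) → EuclideanSpace ℝ (Fin n))
    (gP : EuclideanSpace ℝ (Fin m) → EuclideanSpace ℝ (Fin m))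
    (D : Matrix (Fin n) (Fin n) ℝ) (E : Matrix (Fin m) (Fin m) ℝ)
    (hD : D.PosDef) (hE : E.PosDef)
    -- ∇Q is co-coercive w.r.t. D⁻¹ and ∇P* is co-coercive w.r.t. E⁻¹
    (hQcoco : ∀ x x' : EuclideanSpace ℝ (Fin n),
      ⟪Matrix.toEuclideanLin D⁻¹ (gQ x - gQ x'), gQ x - gQ x'⟫ ≤ ⟪gQ x - gQ x', x - x'⟫)
    (hPcoco : ∀ y y' : EuclideanSpace ℝ (Fin m),
      ⟪Matrix.toEuclideanLin E⁻¹ (gP y - gP y'), gP y - gP y'⟫ ≤ ⟪gP y - gP y', y - y'⟫)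
    (T : Matrix (Fin n) (Fin n) ℝ) (Sig : Matrix (Fin m) (Fin m) ℝ)
    (hT : T.PosDef) (hSig : Sig.PosDef)
    (hTD : (T⁻¹ - (1/2 : ℝ) • D).PosDef) (hSE : (Sig⁻¹ - (1/2 : ℝ) • E).PosDef)
    -- ‖(Σ⁻¹ − E/2)^{−1/2} K (T⁻¹ − D/2)^{−1/2}‖ ≤ c < 1 (Euclidean norms via dot products)
    (hKnorm : ∃ c < (1:ℝ), ∀ x : Fin n → ℝ,
      Real.sqrt
          (((((hSE.posSemidef.sqrt)⁻¹ * Kmat * (hTD.posSemidef.sqrt)⁻¹) *ᵥ x) ⬝ᵥ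
            ((((hSE.posSemidef.sqrt)⁻¹ * Kmat * (hTD.posSemidef.sqrt)⁻¹) *ᵥ x))))
        ≤ c * Real.sqrt (x ⬝ᵥ x))
    -- a saddle point exists
    (hsaddle : ∃ (xs : EuclideanSpace ℝ (Fin n)) (ys : EuclideanSpace ℝ (Fin m)),
      -(gQ xs + Matrix.toEuclideanLin Kmatᵀ ys) ∈ subdiff G xs ∧
      Matrix.toEuclideanLin Kmat xs - gP ys ∈ subdiff Fs ys)
    -- (α_k) nondecreasing in [0, α] with α < 1
    (α : ℝ) (hα1 : α < 1)
    (αk : ℕ → ℝ) (hαk : ∀ k, αk k ∈ Set.Icc 0 α)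
    -- preconditioned inertial primal–dual iterates
    (x ξ : ℕ → EuclideanSpace ℝ (Fin n)) (y ζ : ℕ → EuclideanSpace ℝ (Fin m))
    (hξ : ∀ k, ξ k = x k + αk k • (x k - x (k - 1)))
    (hζ : ∀ k, ζ k = y k + αk k • (y k - y (k - 1)))
    (hxstep : ∀ k, Matrix.toEuclideanLin T⁻¹ (ξ k - x (k + 1)) - gQ (ξ k)
        - Matrix.toEuclideanLin Kmatᵀ (ζ k) ∈ subdiff G (x (k + 1)))
    (hystep : ∀ k, Matrix.toEuclideanLin Sig⁻¹ (ζ k - y (k + 1)) - gP (ζ k)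
        + Matrix.toEuclideanLin Kmat ((2:ℝ) • x (k + 1) - ξ k) ∈ subdiff Fs (y (k + 1)))
    -- summability of the inertial error term in the M-metric
    (hsum : Summable (fun k : ℕ => αk k *
      (⟪Matrix.toEuclideanLin T⁻¹ (x k - x (k - 1)), x k - x (k - 1)⟫
        - 2 * ⟪Matrix.toEuclideanLin Kmat (x k - x (k - 1)), y k - y (k - 1)⟫
        + ⟪Matrix.toEuclideanLin Sig⁻¹ (y k - y (k - 1)), y k - y (k - 1)⟫))) :
    ∃ (xs : EuclideanSpace ℝ (Fin n)) (ys : EuclideanSpace ℝ (Fin m)),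
      (-(gQ xs + Matrix.toEuclideanLin Kmatᵀ ys) ∈ subdiff G xs ∧
        Matrix.toEuclideanLin Kmat xs - gP ys ∈ subdiff Fs ys) ∧
      Tendsto x atTop (𝓝 xs) ∧ Tendsto y atTop (𝓝 ys) := by
  obtain ⟨c, hc1, hc⟩ := hKnorm
  have hKt : toEuclideanLin Kmatᵀ = (toEuclideanLin Kmat).adjoint := by
    rw [← conjTranspose_eq_transpose_of_trivial, toEuclideanLin_conjTranspose_eq_adjoint]
  have hS := exists_pos_mul_le_primalDualForm_toEuclideanLin hTD hSE Kmat hc1 hc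
  simp only [map_sub, map_smul] at hS
  simp only [hKt] at hsaddle hxstep ⊢
  exact IsInertialPrimalDual.exists_isSaddlePoint_tendsto ⟨hξ, hζ, hxstep, hystep⟩
    (continuousOn_univ.1 (hG.continuousOn isOpen_univ))
    (continuousOn_univ.1 (hFs.continuousOn isOpen_univ))
    (isSymmetric_toEuclideanLin_iff.2 hT.inv.isHermitian)
    (isSymmetric_toEuclideanLin_iff.2 hSig.inv.isHermitian)
    (isSymmetric_toEuclideanLin_iff.2 hD.inv.isHermitian)
    (isSymmetric_toEuclideanLin_iff.2 hE.inv.isHermitian)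
    hD.inv.exists_pos_mul_norm_sq_le_inner hE.inv.exists_pos_mul_norm_sq_le_inner
    (toEuclideanLin_nonsing_inv_apply ((isUnit_iff_isUnit_det D).1 hD.isUnit))
    (toEuclideanLin_nonsing_inv_apply ((isUnit_iff_isUnit_det E).1 hE.isUnit))
    hQcoco hPcoco hS hα1 hαk hsum hsaddle

/-- convergence of the preconditioned inertial primal–dual algorithm with
symmetric positive definite step-size matrices `T`, `Σ`, co-coercivity matrices `D`, `E`,
and preconditioned norm condition `‖(Σ⁻¹ − E/2)^{−1/2} K (T⁻¹ − D/2)^{−1/2}‖ ≤ c < 1`.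
The convention `(x⁻¹, y⁻¹) = (x⁰, y⁰)` is encoded via truncated subtraction. -/
theorem stmt13 {n m : ℕ}
    (Kmat : Matrix (Fin m) (Fin n) ℝ)
    (G Q : EuclideanSpace ℝ (Fin n) → ℝ) (Fs Ps : EuclideanSpace ℝ (Fin m) → ℝ)
    (hG : ConvexOn ℝ Set.univ G) (hFs : ConvexOn ℝ Set.univ Fs)
    (hQ : ConvexOn ℝ Set.univ Q) (hPs : ConvexOn ℝ Set.univ Ps)
    (gQ : EuclideanSpace ℝ (Fin n) → EuclideanSpace ℝ (Fin n))
    (gP : EuclideanSpace ℝ (Fin m) → EuclideanSpace ℝ (Fin m))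
    (hgQ : ∀ x, HasGradientAt Q (gQ x) x) (hgP : ∀ y, HasGradientAt Ps (gP y) y)
    (D : Matrix (Fin n) (Fin n) ℝ) (E : Matrix (Fin m) (Fin m) ℝ)
    (hD : D.PosDef) (hE : E.PosDef)
    -- ∇Q is co-coercive w.r.t. D⁻¹ and ∇P* is co-coercive w.r.t. E⁻¹
    (hQcoco : ∀ x x' : EuclideanSpace ℝ (Fin n),
      ⟪Matrix.toEuclideanLin D⁻¹ (gQ x - gQ x'), gQ x - gQ x'⟫ ≤ ⟪gQ x - gQ x', x - x'⟫)
    (hPcoco : ∀ y y' : EuclideanSpace ℝ (Fin m),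
      ⟪Matrix.toEuclideanLin E⁻¹ (gP y - gP y'), gP y - gP y'⟫ ≤ ⟪gP y - gP y', y - y'⟫)
    (T : Matrix (Fin n) (Fin n) ℝ) (Sig : Matrix (Fin m) (Fin m) ℝ)
    (hT : T.PosDef) (hSig : Sig.PosDef)
    (hTD : (T⁻¹ - (1/2 : ℝ) • D).PosDef) (hSE : (Sig⁻¹ - (1/2 : ℝ) • E).PosDef)
    -- ‖(Σ⁻¹ − E/2)^{−1/2} K (T⁻¹ − D/2)^{−1/2}‖ ≤ c < 1 (Euclidean norms via dot products)
    (hKnorm : ∃ c < (1:ℝ), ∀ x : Fin n → ℝ,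
      Real.sqrt
          (((((hSE.posSemidef.sqrt)⁻¹ * Kmat * (hTD.posSemidef.sqrt)⁻¹) *ᵥ x) ⬝ᵥ
            ((((hSE.posSemidef.sqrt)⁻¹ * Kmat * (hTD.posSemidef.sqrt)⁻¹) *ᵥ x))))
        ≤ c * Real.sqrt (x ⬝ᵥ x))
    -- a saddle point exists
    (hsaddle : ∃ (xs : EuclideanSpace ℝ (Fin n)) (ys : EuclideanSpace ℝ (Fin m)),
      -(gQ xs + Matrix.toEuclideanLin Kmatᵀ ys) ∈ subdiff G xs ∧
      Matrix.toEuclideanLin Kmat xs - gP ys ∈ subdiff Fs ys)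
    -- (α_k) nondecreasing in [0, α] with α < 1
    (α : ℝ) (hα1 : α < 1)
    (αk : ℕ → ℝ) (hαk : ∀ k, αk k ∈ Set.Icc 0 α) (hαmono : Monotone αk)
    -- preconditioned inertial primal–dual iterates
    (x ξ : ℕ → EuclideanSpace ℝ (Fin n)) (y ζ : ℕ → EuclideanSpace ℝ (Fin m))
    (hξ : ∀ k, ξ k = x k + αk k • (x k - x (k - 1)))
    (hζ : ∀ k, ζ k = y k + αk k • (y k - y (k - 1)))
    (hxstep : ∀ k, Matrix.toEuclideanLin T⁻¹ (ξ k - x (k + 1)) - gQ (ξ k)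
        - Matrix.toEuclideanLin Kmatᵀ (ζ k) ∈ subdiff G (x (k + 1)))
    (hystep : ∀ k, Matrix.toEuclideanLin Sig⁻¹ (ζ k - y (k + 1)) - gP (ζ k)
        + Matrix.toEuclideanLin Kmat ((2:ℝ) • x (k + 1) - ξ k) ∈ subdiff Fs (y (k + 1)))
    -- summability of the inertial error term in the M-metric
    (hsum : Summable (fun k : ℕ => αk k *
      (⟪Matrix.toEuclideanLin T⁻¹ (x k - x (k - 1)), x k - x (k - 1)⟫
        - 2 * ⟪Matrix.toEuclideanLin Kmat (x k - x (k - 1)), y k - y (k - 1)⟫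
        + ⟪Matrix.toEuclideanLin Sig⁻¹ (y k - y (k - 1)), y k - y (k - 1)⟫))) :
    ∃ (xs : EuclideanSpace ℝ (Fin n)) (ys : EuclideanSpace ℝ (Fin m)),
      (-(gQ xs + Matrix.toEuclideanLin Kmatᵀ ys) ∈ subdiff G xs ∧
        Matrix.toEuclideanLin Kmat xs - gP ys ∈ subdiff Fs ys) ∧
      Tendsto x atTop (𝓝 xs) ∧ Tendsto y atTop (𝓝 ys) :=
  stmt13_general Kmat G Fs hG hFs gQ gP D E hD hE hQcoco hPcoco T Sig hT hSig hTD hSE hKnorm hsaddle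
    α hα1 αk hαk x ξ y ζ hξ hζ hxstep hystep hsum
end

section
/- Let K be a real m×n matrix, d₁,…,dₙ > 0, e₁,…,eₘ > 0, γ, δ ∈ (0,2), r > 0 and s ∈ [0,2]. With the convention 0⁰ = 0 for the powers |K_{ij}|^s and |K_{ij}|^{2−s}, define τ_j = 1/(d_j/γ + r·∑_{i=1}^m |K_{ij}|^{2−s}) and σ_i = 1/(e_i/δ + (1/r)·∑_{j=1}^n |K_{ij}|^s). Then for all i, j: 1/τ_j − d_j/2 > 0 and 1/σ_i − e_i/2 > 0, and for every x ∈ ℝⁿ: ∑_{i=1}^m (1/(1/σ_i − e_i/2))·(∑_{j=1}^n K_{ij} x_j / √(1/τ_j − d_j/2))² ≤ ∑_{j=1}^n x_j². Equivalently, with T = diag(τ_j), Σ = diag(σ_i), D = diag(d_j), E = diag(e_i): T⁻¹ − D/2 and Σ⁻¹ − E/2 are positive definite and the operator norm of (Σ⁻¹ − E/2)^{−1/2} K (T⁻¹ − D/2)^{−1/2} is at most 1. -/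
open Matrix

/-- `a ^ t` with the convention `0 ^ 0 = 0`. -/
noncomputable def rpow0 (a t : ℝ) : ℝ := if a = 0 then 0 else a ^ t

lemma rpow0_nonneg {a : ℝ} (ha : 0 ≤ a) (t : ℝ) : 0 ≤ rpow0 a t := by
  unfold rpow0
  split
  · exact le_refl _
  · exact le_of_lt (Real.rpow_pos_of_pos (lt_of_le_of_ne ha (Ne.symm ‹_›)) t)

lemma rpow0_mul_rpow0 (a s : ℝ) (ha : 0 ≤ a) :
    rpow0 a s * rpow0 a (2 - s) = a ^ 2 := by
  unfold rpow0
  by_cases h : a = 0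
  · simp [h]
  · rw [if_neg h, if_neg h, ← Real.rpow_add (lt_of_le_of_ne ha (Ne.symm h)),
      (by ring : s + (2 - s) = (2:ℝ)), Real.rpow_two]

/-- the diagonal preconditioning rule
`τ_j = 1/(d_j/γ + r·∑_i |K_{ij}|^{2−s})`, `σ_i = 1/(e_i/δ + (1/r)·∑_j |K_{ij}|^s)`
(with the convention `0⁰ = 0`) satisfies `1/τ_j − d_j/2 > 0`, `1/σ_i − e_i/2 > 0`, and
the preconditioned operator norm bound
`∑_i (1/σ_i − e_i/2)⁻¹ (∑_j K_{ij} x_j/√(1/τ_j − d_j/2))² ≤ ∑_j x_j²`. -/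
theorem stmt14 {m n : ℕ} (K : Matrix (Fin m) (Fin n) ℝ)
    (d : Fin n → ℝ) (e : Fin m → ℝ) (hd : ∀ j, 0 < d j) (he : ∀ i, 0 < e i)
    (γ δ r s : ℝ) (hγ : γ ∈ Set.Ioo (0:ℝ) 2) (hδ : δ ∈ Set.Ioo (0:ℝ) 2)
    (hr : 0 < r) (hs : s ∈ Set.Icc (0:ℝ) 2)
    (τ : Fin n → ℝ) (σ : Fin m → ℝ)
    (hτ : ∀ j, τ j = 1 / (d j / γ + r * ∑ i, rpow0 |K i j| (2 - s)))
    (hσ : ∀ i, σ i = 1 / (e i / δ + (1/r) * ∑ j, rpow0 |K i j| s)) :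
    (∀ j, 0 < 1 / τ j - d j / 2) ∧ (∀ i, 0 < 1 / σ i - e i / 2) ∧
      ∀ x : Fin n → ℝ,
        ∑ i, (1 / (1 / σ i - e i / 2))
            * (∑ j, K i j * x j / Real.sqrt (1 / τ j - d j / 2))^2
          ≤ ∑ j, (x j)^2 := by
  -- notation
  set a : Matrix (Fin m) (Fin n) ℝ := fun i j => rpow0 |K i j| (2 - s) with ha
  set b : Matrix (Fin m) (Fin n) ℝ := fun i j => rpow0 |K i j| s with hb
  have ha0 : ∀ i j, 0 ≤ a i j := fun i j => rpow0_nonneg (abs_nonneg _) _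
  have hb0 : ∀ i j, 0 ≤ b i j := fun i j => rpow0_nonneg (abs_nonneg _) _
  set S : Fin n → ℝ := fun j => ∑ i, a i j with hS
  set T : Fin m → ℝ := fun i => ∑ j, b i j with hT
  have hS0 : ∀ j, 0 ≤ S j := fun j => Finset.sum_nonneg fun i _ => ha0 i j
  have hT0 : ∀ i, 0 ≤ T i := fun i => Finset.sum_nonneg fun j _ => hb0 i j
  have hτden : ∀ j, 0 < d j / γ + r * S j := fun j =>
    add_pos_of_pos_of_nonneg (div_pos (hd j) hγ.1) (mul_nonneg hr.le (hS0 j))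
  have hσden : ∀ i, 0 < e i / δ + (1/r) * T i := fun i =>
    add_pos_of_pos_of_nonneg (div_pos (he i) hδ.1)
      (mul_nonneg (by positivity) (hT0 i))
  have hτinv : ∀ j, 1 / τ j = d j / γ + r * S j := fun j => by
    rw [hτ j, one_div_one_div]
  have hσinv : ∀ i, 1 / σ i = e i / δ + (1/r) * T i := fun i => by
    rw [hσ i, one_div_one_div]
  have hdγ : ∀ j, d j / 2 < d j / γ := fun j =>
    div_lt_div_of_pos_left (hd j) hγ.1 hγ.2
  have heδ : ∀ i, e i / 2 < e i / δ := fun i =>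
    div_lt_div_of_pos_left (he i) hδ.1 hδ.2
  set A : Fin n → ℝ := fun j => 1 / τ j - d j / 2 with hA
  set B : Fin m → ℝ := fun i => 1 / σ i - e i / 2 with hB
  have hApos : ∀ j, 0 < A j := fun j => by
    have := hτinv j
    simp only [hA]
    rw [this]
    nlinarith [hdγ j, mul_nonneg hr.le (hS0 j)]
  have hBpos : ∀ i, 0 < B i := fun i => by
    have := hσinv i
    simp only [hB]
    rw [this]
    nlinarith [heδ i, mul_nonneg (le_of_lt (by positivity : (0:ℝ) < 1/r)) (hT0 i)]
  have hAgS : ∀ j, r * S j ≤ A j := fun j => by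
    simp only [hA]; rw [hτinv j]; nlinarith [hdγ j]
  have hBgT : ∀ i, (1/r) * T i ≤ B i := fun i => by
    simp only [hB]; rw [hσinv i]; nlinarith [heδ i]
  refine ⟨hApos, hBpos, fun x => ?_⟩
  set y : Fin n → ℝ := fun j => x j / Real.sqrt (A j) with hy
  -- key entrywise identity : K i j ^ 2 = b i j * a i j
  have hKab : ∀ i j, (K i j) ^ 2 = b i j * a i j := fun i j => by
    rw [← sq_abs]
    exact (rpow0_mul_rpow0 |K i j| s (abs_nonneg _)).symm
  -- Cauchy–Schwarz per row
  have hrow : ∀ i, (∑ j, K i j * y j) ^ 2 ≤ T i * ∑ j, a i j * (y j)^2 := by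
    intro i
    have h1 : (∑ j, K i j * y j) ^ 2 ≤ (∑ j, |K i j * y j|) ^ 2 := by
      rw [← sq_abs (∑ j, K i j * y j)]
      exact pow_le_pow_left₀ (abs_nonneg _) (Finset.abs_sum_le_sum_abs _ _) 2
    have h2 : ∀ j, |K i j * y j| = Real.sqrt (b i j) * (Real.sqrt (a i j) * |y j|) := by
      intro j
      rw [abs_mul, ← mul_assoc, ← Real.sqrt_mul (hb0 i j), ← hKab i j,
        Real.sqrt_sq_eq_abs]
    have h3 : (∑ j, |K i j * y j|) ^ 2
        ≤ (∑ j, Real.sqrt (b i j) ^ 2) * ∑ j, (Real.sqrt (a i j) * |y j|) ^ 2 := by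
      simp_rw [h2]
      exact Finset.sum_mul_sq_le_sq_mul_sq _ _ _
    calc (∑ j, K i j * y j) ^ 2 ≤ (∑ j, |K i j * y j|) ^ 2 := h1
      _ ≤ (∑ j, Real.sqrt (b i j) ^ 2) * ∑ j, (Real.sqrt (a i j) * |y j|) ^ 2 := h3
      _ = T i * ∑ j, a i j * (y j)^2 := by
          congr 1
          · exact Finset.sum_congr rfl fun j _ => Real.sq_sqrt (hb0 i j)
          · refine Finset.sum_congr rfl fun j _ => ?_
            rw [mul_pow, Real.sq_sqrt (ha0 i j), sq_abs]
  have hLHS : ∀ i, (∑ j, K i j * x j / Real.sqrt (A j)) = ∑ j, K i j * y j := by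
    intro i
    exact Finset.sum_congr rfl fun j _ => (mul_div_assoc _ _ _)
  calc ∑ i, (1 / B i) * (∑ j, K i j * x j / Real.sqrt (A j))^2
      = ∑ i, (1 / B i) * (∑ j, K i j * y j)^2 := by
        refine Finset.sum_congr rfl fun i _ => by rw [hLHS i]
    _ ≤ ∑ i, (1 / B i) * (T i * ∑ j, a i j * (y j)^2) := by
        refine Finset.sum_le_sum fun i _ => ?_
        exact mul_le_mul_of_nonneg_left (hrow i) (one_div_nonneg.2 (hBpos i).le)
    _ ≤ ∑ i, r * ∑ j, a i j * (y j)^2 := by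
        refine Finset.sum_le_sum fun i _ => ?_
        rw [← mul_assoc]
        refine mul_le_mul_of_nonneg_right ?_
          (Finset.sum_nonneg fun j _ => mul_nonneg (ha0 i j) (sq_nonneg _))
        rw [one_div, inv_mul_le_iff₀ (hBpos i)]
        calc T i = r * ((1/r) * T i) := by field_simp
          _ ≤ r * B i := mul_le_mul_of_nonneg_left (hBgT i) hr.le
          _ = B i * r := mul_comm _ _
    _ = ∑ j, (r * S j) * (y j)^2 := by
        rw [← Finset.mul_sum, Finset.sum_comm, Finset.mul_sum]
        refine Finset.sum_congr rfl fun j _ => ?_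
        rw [← Finset.sum_mul, ← mul_assoc]
    _ ≤ ∑ j, A j * (y j)^2 := by
        refine Finset.sum_le_sum fun j _ => ?_
        exact mul_le_mul_of_nonneg_right (hAgS j) (sq_nonneg _)
    _ = ∑ j, (x j)^2 := by
        refine Finset.sum_congr rfl fun j _ => ?_
        rw [hy]
        simp only
        rw [div_pow, Real.sq_sqrt (hApos j).le, mul_div_cancel₀ _ (hApos j).ne']
end
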